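/- arXiv:0805.3432 — 3 statements merged into one kernel-verified Lean document; each statement's English description precedes it below -/
import Mathlib

section
/- Let H be a bialgebra and D an H-bimodule algebra (i.e., D is an algebra with compatible left and right H-actions satisfying h·1_D = ε(h)1_D, 1_D·h = ε(h)1_D, h·(cd) = (h₁·c)(h₂·d), and (cd)·h = (c·h₁)(d·h₂)). Then the vector space D ⊗ H with unit 1_D ⊗ 1_H and multiplication (d ⊗ h)(d' ⊗ h') = (d·h'₂)(h₁·d') ⊗ h₂h'₁ is an associative unital algebra (the L-R-smash product D ♮ H). -/
open TensorProduct
noncomputable section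
namespace LRPaper
variable (k : Type*) [CommRing k]

def tt (A B C E : Type*) [AddCommGroup A] [Module k A] [AddCommGroup B] [Module k B]
    [AddCommGroup C] [Module k C] [AddCommGroup E] [Module k E] :
    (A ⊗[k] B) ⊗[k] (C ⊗[k] E) →ₗ[k] (A ⊗[k] C) ⊗[k] (B ⊗[k] E) :=
  (TensorProduct.tensorTensorTensorComm k A B C E).toLinearMap

def asl (A B C : Type*) [AddCommGroup A] [Module k A] [AddCommGroup B] [Module k B]
    [AddCommGroup C] [Module k C] :
    (A ⊗[k] B) ⊗[k] C →ₗ[k] A ⊗[k] (B ⊗[k] C) :=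
  (TensorProduct.assoc k A B C).toLinearMap

def asr (A B C : Type*) [AddCommGroup A] [Module k A] [AddCommGroup B] [Module k B]
    [AddCommGroup C] [Module k C] :
    A ⊗[k] (B ⊗[k] C) →ₗ[k] (A ⊗[k] B) ⊗[k] C :=
  (TensorProduct.assoc k A B C).symm.toLinearMap

def sw (A B : Type*) [AddCommGroup A] [Module k A] [AddCommGroup B] [Module k B] :
    A ⊗[k] B →ₗ[k] B ⊗[k] A :=
  (TensorProduct.comm k A B).toLinearMap


/-- `middle f` applies `f` to the two middle tensor factors. -/
def middle {A B C E B' C' : Type*} [AddCommGroup A] [Module k A] [AddCommGroup B] [Module k B]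
    [AddCommGroup C] [Module k C] [AddCommGroup E] [Module k E]
    [AddCommGroup B'] [Module k B'] [AddCommGroup C'] [Module k C']
    (f : B ⊗[k] C →ₗ[k] B' ⊗[k] C') :
    (A ⊗[k] B) ⊗[k] (C ⊗[k] E) →ₗ[k] (A ⊗[k] B') ⊗[k] (C' ⊗[k] E) :=
  asl k (A ⊗[k] B') C' E
    ∘ₗ TensorProduct.map
        (asr k A B' C' ∘ₗ TensorProduct.map LinearMap.id f ∘ₗ asl k A B C) LinearMap.id
    ∘ₗ asr k (A ⊗[k] B) C E

section Conditions
variable (H : Type*) [Ring H] [Bialgebra k H]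
variable {M N : Type*} [AddCommGroup M] [Module k M] [AddCommGroup N] [Module k N]

/-- counit of `H` -/
def εH : H →ₗ[k] k := Coalgebra.counit
/-- comultiplication of `H` -/
def δH : H →ₗ[k] H ⊗[k] H := Coalgebra.comul
/-- multiplication of `H` -/
def μH : H ⊗[k] H →ₗ[k] H := LinearMap.mul' k H

def IsLeftModule (aL : H ⊗[k] M →ₗ[k] M) : Prop :=
  (∀ m : M, aL (1 ⊗ₜ m) = m) ∧
  ∀ (h h' : H) (m : M), aL ((h * h') ⊗ₜ m) = aL (h ⊗ₜ aL (h' ⊗ₜ m))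

def IsRightModule (aR : M ⊗[k] H →ₗ[k] M) : Prop :=
  (∀ m : M, aR (m ⊗ₜ 1) = m) ∧
  ∀ (m : M) (h h' : H), aR (m ⊗ₜ (h * h')) = aR (aR (m ⊗ₜ h) ⊗ₜ h')

def IsBimodule (aL : H ⊗[k] M →ₗ[k] M) (aR : M ⊗[k] H →ₗ[k] M) : Prop :=
  IsLeftModule k H aL ∧ IsRightModule k H aR ∧
  ∀ (h : H) (m : M) (h' : H), aR (aL (h ⊗ₜ m) ⊗ₜ h') = aL (h ⊗ₜ aR (m ⊗ₜ h'))

def IsLeftComodule (cL : M →ₗ[k] H ⊗[k] M) : Prop :=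
  (∀ m : M, TensorProduct.lid k M (TensorProduct.map (εH k H) LinearMap.id (cL m)) = m) ∧
  ∀ m : M, TensorProduct.map LinearMap.id cL (cL m)
    = TensorProduct.assoc k H H M (TensorProduct.map (δH k H) LinearMap.id (cL m))

def IsRightComodule (cR : M →ₗ[k] M ⊗[k] H) : Prop :=
  (∀ m : M, TensorProduct.rid k M (TensorProduct.map LinearMap.id (εH k H) (cR m)) = m) ∧
  ∀ m : M, TensorProduct.map cR LinearMap.id (cR m)
    = (TensorProduct.assoc k M H H).symm (TensorProduct.map LinearMap.id (δH k H) (cR m))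

def IsBicomodule (cL : M →ₗ[k] H ⊗[k] M) (cR : M →ₗ[k] M ⊗[k] H) : Prop :=
  IsLeftComodule k H cL ∧ IsRightComodule k H cR ∧
  ∀ m : M, TensorProduct.map LinearMap.id cR (cL m)
    = TensorProduct.assoc k H M H (TensorProduct.map cL LinearMap.id (cR m))

/-- `(h₁⊗h₂)⊗m ↦ (h₁·m)⁽⁻¹⁾h₂ ⊗ (h₁·m)⁽⁰⁾` -/
def ydlL (aL : H ⊗[k] M →ₗ[k] M) (cL : M →ₗ[k] H ⊗[k] M) :
    (H ⊗[k] H) ⊗[k] M →ₗ[k] H ⊗[k] M :=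
  TensorProduct.map (μH k H ∘ₗ sw k H H) LinearMap.id
    ∘ₗ asr k H H M
    ∘ₗ TensorProduct.map LinearMap.id (cL ∘ₗ aL)
    ∘ₗ asl k H H M
    ∘ₗ TensorProduct.map (sw k H H) LinearMap.id

/-- `(h₁⊗h₂)⊗m ↦ h₁m⁽⁻¹⁾ ⊗ h₂·m⁽⁰⁾` -/
def ydlR (aL : H ⊗[k] M →ₗ[k] M) (cL : M →ₗ[k] H ⊗[k] M) :
    (H ⊗[k] H) ⊗[k] M →ₗ[k] H ⊗[k] M :=
  TensorProduct.map (μH k H) aL ∘ₗ tt k H H H M ∘ₗ TensorProduct.map LinearMap.id cL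

/-- left-left Yetter–Drinfeld compatibility -/
def CondYDl (aL : H ⊗[k] M →ₗ[k] M) (cL : M →ₗ[k] H ⊗[k] M) : Prop :=
  ∀ (h : H) (m : M),
    ydlL k H aL cL (δH k H h ⊗ₜ m) = ydlR k H aL cL (δH k H h ⊗ₜ m)

/-- left-right Long compatibility -/
def CondLongLR (aL : H ⊗[k] M →ₗ[k] M) (cR : M →ₗ[k] M ⊗[k] H) : Prop :=
  ∀ (h : H) (m : M),
    cR (aL (h ⊗ₜ m))
      = TensorProduct.map aL LinearMap.id ((TensorProduct.assoc k H M H).symm (h ⊗ₜ cR m))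

/-- `m⊗(h₁⊗h₂) ↦ (m·h₂)⁽⁰⁾ ⊗ h₁(m·h₂)⁽¹⁾` -/
def ydrL (aR : M ⊗[k] H →ₗ[k] M) (cR : M →ₗ[k] M ⊗[k] H) :
    M ⊗[k] (H ⊗[k] H) →ₗ[k] M ⊗[k] H :=
  TensorProduct.map LinearMap.id (μH k H ∘ₗ sw k H H)
    ∘ₗ asl k M H H
    ∘ₗ TensorProduct.map (cR ∘ₗ aR) LinearMap.id
    ∘ₗ asr k M H H
    ∘ₗ TensorProduct.map LinearMap.id (sw k H H)

/-- `m⊗(h₁⊗h₂) ↦ m⁽⁰⁾·h₁ ⊗ m⁽¹⁾h₂` -/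
def ydrR (aR : M ⊗[k] H →ₗ[k] M) (cR : M →ₗ[k] M ⊗[k] H) :
    M ⊗[k] (H ⊗[k] H) →ₗ[k] M ⊗[k] H :=
  TensorProduct.map aR (μH k H) ∘ₗ tt k M H H H ∘ₗ TensorProduct.map cR LinearMap.id

/-- right-right Yetter–Drinfeld compatibility -/
def CondYDr (aR : M ⊗[k] H →ₗ[k] M) (cR : M →ₗ[k] M ⊗[k] H) : Prop :=
  ∀ (h : H) (m : M),
    ydrL k H aR cR (m ⊗ₜ δH k H h) = ydrR k H aR cR (m ⊗ₜ δH k H h)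

/-- right-left Long compatibility -/
def CondLongRL (aR : M ⊗[k] H →ₗ[k] M) (cL : M →ₗ[k] H ⊗[k] M) : Prop :=
  ∀ (m : M) (h : H),
    cL (aR (m ⊗ₜ h))
      = TensorProduct.map LinearMap.id aR (TensorProduct.assoc k H M H (cL m ⊗ₜ h))

/-- objects of the category LR(H) -/
def IsLRObj (aL : H ⊗[k] M →ₗ[k] M) (aR : M ⊗[k] H →ₗ[k] M)
    (cL : M →ₗ[k] H ⊗[k] M) (cR : M →ₗ[k] M ⊗[k] H) : Prop :=
  IsBimodule k H aL aR ∧ IsBicomodule k H cL cR ∧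
  CondYDl k H aL cL ∧ CondLongLR k H aL cR ∧ CondYDr k H aR cR ∧ CondLongRL k H aR cL


variable {P : Type*} [AddCommGroup P] [Module k P]

/-- diagonal left action on `M ⊗ N` -/
def tActL (aLM : H ⊗[k] M →ₗ[k] M) (aLN : H ⊗[k] N →ₗ[k] N) :
    H ⊗[k] (M ⊗[k] N) →ₗ[k] M ⊗[k] N :=
  TensorProduct.map aLM aLN ∘ₗ tt k H H M N ∘ₗ TensorProduct.map (δH k H) LinearMap.id

/-- diagonal right action on `M ⊗ N` -/
def tActR (aRM : M ⊗[k] H →ₗ[k] M) (aRN : N ⊗[k] H →ₗ[k] N) :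
    (M ⊗[k] N) ⊗[k] H →ₗ[k] M ⊗[k] N :=
  TensorProduct.map aRM aRN ∘ₗ tt k M N H H ∘ₗ TensorProduct.map LinearMap.id (δH k H)

/-- codiagonal left coaction on `M ⊗ N` -/
def tCoactL (cLM : M →ₗ[k] H ⊗[k] M) (cLN : N →ₗ[k] H ⊗[k] N) :
    M ⊗[k] N →ₗ[k] H ⊗[k] (M ⊗[k] N) :=
  TensorProduct.map (μH k H) LinearMap.id ∘ₗ tt k H M H N ∘ₗ TensorProduct.map cLM cLN

/-- codiagonal right coaction on `M ⊗ N` -/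
def tCoactR (cRM : M →ₗ[k] M ⊗[k] H) (cRN : N →ₗ[k] N ⊗[k] H) :
    M ⊗[k] N →ₗ[k] (M ⊗[k] N) ⊗[k] H :=
  TensorProduct.map LinearMap.id (μH k H) ∘ₗ tt k M H N H ∘ₗ TensorProduct.map cRM cRN

/-- the (pre)braiding `m ⊗ n ↦ m⁽⁻¹⁾·n⁽⁰⁾ ⊗ m⁽⁰⁾·n⁽¹⁾` of LR(H) -/
def braid (cLM : M →ₗ[k] H ⊗[k] M) (aRM : M ⊗[k] H →ₗ[k] M)
    (aLN : H ⊗[k] N →ₗ[k] N) (cRN : N →ₗ[k] N ⊗[k] H) :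
    M ⊗[k] N →ₗ[k] N ⊗[k] M :=
  TensorProduct.map aLN aRM ∘ₗ tt k H M N H ∘ₗ TensorProduct.map cLM cRN

/-- coalgebra axioms for explicit comultiplication and counit -/
def IsCoalg (Δd : M →ₗ[k] M ⊗[k] M) (εd : M →ₗ[k] k) : Prop :=
  (∀ m : M, TensorProduct.lid k M (TensorProduct.map εd LinearMap.id (Δd m)) = m) ∧
  (∀ m : M, TensorProduct.rid k M (TensorProduct.map LinearMap.id εd (Δd m)) = m) ∧
  ∀ m : M, TensorProduct.assoc k M M M (TensorProduct.map Δd LinearMap.id (Δd m))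
    = TensorProduct.map LinearMap.id Δd (Δd m)

/-- `M` is a left `H`-comodule coalgebra -/
def IsLComodCoalg (cL : M →ₗ[k] H ⊗[k] M) (Δd : M →ₗ[k] M ⊗[k] M) (εd : M →ₗ[k] k) : Prop :=
  (∀ m : M,
    TensorProduct.map (μH k H) LinearMap.id (tt k H M H M (TensorProduct.map cL cL (Δd m)))
      = TensorProduct.map LinearMap.id Δd (cL m)) ∧
  ∀ m : M, TensorProduct.rid k H (TensorProduct.map LinearMap.id εd (cL m)) = εd m • (1 : H)

/-- `M` is a right `H`-comodule coalgebra -/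
def IsRComodCoalg (cR : M →ₗ[k] M ⊗[k] H) (Δd : M →ₗ[k] M ⊗[k] M) (εd : M →ₗ[k] k) : Prop :=
  (∀ m : M,
    TensorProduct.map LinearMap.id (μH k H) (tt k M H M H (TensorProduct.map cR cR (Δd m)))
      = TensorProduct.map Δd LinearMap.id (cR m)) ∧
  ∀ m : M, TensorProduct.lid k H (TensorProduct.map εd LinearMap.id (cR m)) = εd m • (1 : H)

/-- morphisms of LR(H) -/
def IsLRHom {M' : Type*} [AddCommGroup M'] [Module k M']
    (aLM : H ⊗[k] M →ₗ[k] M) (aRM : M ⊗[k] H →ₗ[k] M)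
    (cLM : M →ₗ[k] H ⊗[k] M) (cRM : M →ₗ[k] M ⊗[k] H)
    (aLM' : H ⊗[k] M' →ₗ[k] M') (aRM' : M' ⊗[k] H →ₗ[k] M')
    (cLM' : M' →ₗ[k] H ⊗[k] M') (cRM' : M' →ₗ[k] M' ⊗[k] H)
    (f : M →ₗ[k] M') : Prop :=
  (∀ (h : H) (m : M), f (aLM (h ⊗ₜ m)) = aLM' (h ⊗ₜ f m)) ∧
  (∀ (m : M) (h : H), f (aRM (m ⊗ₜ h)) = aRM' (f m ⊗ₜ h)) ∧
  (∀ m : M, cLM' (f m) = TensorProduct.map LinearMap.id f (cLM m)) ∧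
  (∀ m : M, cRM' (f m) = TensorProduct.map f LinearMap.id (cRM m))


end Conditions

section AlgebraConditions
variable (H : Type*) [Ring H] [Bialgebra k H]
variable {D : Type*} [Ring D] [Algebra k D]

/-- multiplication of `D` -/
def μD : D ⊗[k] D →ₗ[k] D := LinearMap.mul' k D

/-- `D` is a left `H`-module algebra -/
def IsLeftModuleAlgebra (aL : H ⊗[k] D →ₗ[k] D) : Prop :=
  (∀ h : H, aL (h ⊗ₜ (1 : D)) = εH k H h • (1 : D)) ∧
  ∀ (h : H) (c d : D),
    aL (h ⊗ₜ (c * d))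
      = μD k (TensorProduct.map aL aL (tt k H H D D (δH k H h ⊗ₜ (c ⊗ₜ d))))

/-- `D` is a right `H`-module algebra -/
def IsRightModuleAlgebra (aR : D ⊗[k] H →ₗ[k] D) : Prop :=
  (∀ h : H, aR ((1 : D) ⊗ₜ h) = εH k H h • (1 : D)) ∧
  ∀ (c d : D) (h : H),
    aR ((c * d) ⊗ₜ h)
      = μD k (TensorProduct.map aR aR (tt k D D H H ((c ⊗ₜ d) ⊗ₜ δH k H h)))

/-- `ε_D` is an algebra map -/
def CondCounitAlg (εd : D →ₗ[k] k) : Prop :=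
  εd 1 = 1 ∧ ∀ c d : D, εd (c * d) = εd c * εd d

/-- `ε_D(h·d) = ε(h)ε_D(d)` and `ε_D(d·h) = ε_D(d)ε(h)` -/
def CondCounitActs (aL : H ⊗[k] D →ₗ[k] D) (aR : D ⊗[k] H →ₗ[k] D) (εd : D →ₗ[k] k) : Prop :=
  ∀ (h : H) (d : D), εd (aL (h ⊗ₜ d)) = εH k H h * εd d ∧ εd (aR (d ⊗ₜ h)) = εd d * εH k H h

/-- unitality of the coactions and of the comultiplication of `D` -/
def CondUnits (cL : D →ₗ[k] H ⊗[k] D) (cR : D →ₗ[k] D ⊗[k] H) (Δd : D →ₗ[k] D ⊗[k] D) : Prop :=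
  cL 1 = 1 ⊗ₜ 1 ∧ cR 1 = 1 ⊗ₜ 1 ∧ Δd 1 = 1 ⊗ₜ 1

/-- both coactions of `D` are multiplicative -/
def CondCoactMul (cL : D →ₗ[k] H ⊗[k] D) (cR : D →ₗ[k] D ⊗[k] H) : Prop :=
  (∀ c d : D, cL (c * d)
      = TensorProduct.map (μH k H) (μD k) (tt k H D H D (cL c ⊗ₜ cL d))) ∧
  ∀ c d : D, cR (c * d)
      = TensorProduct.map (μD k) (μH k H) (tt k D H D H (cR c ⊗ₜ cR d))

/-- `Δ_D` is an `H`-bimodule map -/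
def CondComulAct (aL : H ⊗[k] D →ₗ[k] D) (aR : D ⊗[k] H →ₗ[k] D)
    (Δd : D →ₗ[k] D ⊗[k] D) : Prop :=
  (∀ (h : H) (d : D), Δd (aL (h ⊗ₜ d))
      = TensorProduct.map aL aL (tt k H H D D (δH k H h ⊗ₜ Δd d))) ∧
  ∀ (d : D) (h : H), Δd (aR (d ⊗ₜ h))
      = TensorProduct.map aR aR (tt k D D H H (Δd d ⊗ₜ δH k H h))

/-- `Δ_D(cd) = c₁(c₂⁽⁻¹⁾·d₁⁽⁰⁾) ⊗ (c₂⁽⁰⁾·d₁⁽¹⁾)d₂` -/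
def CondBraidMul (aL : H ⊗[k] D →ₗ[k] D) (aR : D ⊗[k] H →ₗ[k] D)
    (cL : D →ₗ[k] H ⊗[k] D) (cR : D →ₗ[k] D ⊗[k] H) (Δd : D →ₗ[k] D ⊗[k] D) : Prop :=
  ∀ c d : D, Δd (c * d)
    = TensorProduct.map (μD k) (μD k)
        (middle k (braid k H cL aR aL cR) (Δd c ⊗ₜ Δd d))

/-- `c⁽⁰⁾·d⁽⁻¹⁾ ⊗ c⁽¹⁾·d⁽⁰⁾ = c ⊗ d` -/
def Cond114 (aL : H ⊗[k] D →ₗ[k] D) (aR : D ⊗[k] H →ₗ[k] D)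
    (cL : D →ₗ[k] H ⊗[k] D) (cR : D →ₗ[k] D ⊗[k] H) : Prop :=
  ∀ c d : D, TensorProduct.map aR aL (tt k D H H D (cR c ⊗ₜ cL d)) = c ⊗ₜ d

/-- `(H, D)` is an L-R-admissible pair -/
def LRAdmissible (aL : H ⊗[k] D →ₗ[k] D) (aR : D ⊗[k] H →ₗ[k] D)
    (cL : D →ₗ[k] H ⊗[k] D) (cR : D →ₗ[k] D ⊗[k] H)
    (Δd : D →ₗ[k] D ⊗[k] D) (εd : D →ₗ[k] k) : Prop :=
  IsBimodule k H aL aR ∧ IsLeftModuleAlgebra k H aL ∧ IsRightModuleAlgebra k H aR ∧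
  IsBicomodule k H cL cR ∧ IsCoalg k Δd εd ∧
  IsLComodCoalg k H cL Δd εd ∧ IsRComodCoalg k H cR Δd εd ∧
  CondCounitAlg k εd ∧ CondCounitActs k H aL aR εd ∧ CondUnits k H cL cR Δd ∧
  CondCoactMul k H cL cR ∧ CondComulAct k H aL aR Δd ∧ CondBraidMul k H aL aR cL cR Δd ∧
  CondYDl k H aL cL ∧ CondLongLR k H aL cR ∧ CondYDr k H aR cR ∧ CondLongRL k H aR cL ∧
  Cond114 k H aL aR cL cR

/-- `Σ (d·h'₂) ⊗ h'₁` -/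
def Xel (aR : D ⊗[k] H →ₗ[k] D) (d : D) (h' : H) : D ⊗[k] H :=
  TensorProduct.map aR LinearMap.id
    ((TensorProduct.assoc k D H H).symm (d ⊗ₜ TensorProduct.comm k H H (δH k H h')))

/-- `Σ (h₁·d') ⊗ h₂` -/
def Yel (aL : H ⊗[k] D →ₗ[k] D) (h : H) (d' : D) : D ⊗[k] H :=
  TensorProduct.comm k H D
    (TensorProduct.map LinearMap.id aL
      (TensorProduct.assoc k H H D
        (TensorProduct.map (sw k H H) LinearMap.id (δH k H h ⊗ₜ d'))))

/-- the element `(d·h'₂)(h₁·d') ⊗ h₂h'₁` of the L-R-smash product -/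
def smashMulExpr (aL : H ⊗[k] D →ₗ[k] D) (aR : D ⊗[k] H →ₗ[k] D)
    (d : D) (h : H) (d' : D) (h' : H) : D ⊗[k] H :=
  TensorProduct.map (μD k) (μH k H ∘ₗ sw k H H)
    (tt k D H D H (Xel k H aR d h' ⊗ₜ Yel k H aL h d'))

end AlgebraConditions

section CoproductGeneric
variable (H : Type*) [Ring H] [Bialgebra k H]
variable {D : Type*} [AddCommGroup D] [Module k D]

/-- structure map of the L-R-smash coproduct:
`(d₁⊗d₂)⊗(h₁⊗h₂) ↦ (d₁⁽⁰⁾ ⊗ d₂⁽⁻¹⁾h₁) ⊗ (d₂⁽⁰⁾ ⊗ h₂d₁⁽¹⁾)` -/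
def Wmap (cL : D →ₗ[k] H ⊗[k] D) (cR : D →ₗ[k] D ⊗[k] H) :
    (D ⊗[k] D) ⊗[k] (H ⊗[k] H) →ₗ[k] (D ⊗[k] H) ⊗[k] (D ⊗[k] H) :=
  TensorProduct.map
      (TensorProduct.map LinearMap.id (μH k H) ∘ₗ asl k D H H)
      (TensorProduct.map LinearMap.id (μH k H ∘ₗ sw k H H) ∘ₗ asl k D H H
        ∘ₗ TensorProduct.map (sw k H D) LinearMap.id)
    ∘ₗ tt k (D ⊗[k] H) (H ⊗[k] D) H H
    ∘ₗ TensorProduct.map (tt k D H H D) LinearMap.id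
    ∘ₗ TensorProduct.map (TensorProduct.map cR cL) LinearMap.id

/-- counit of the L-R-smash coproduct -/
def smashCounit (εd : D →ₗ[k] k) : D ⊗[k] H →ₗ[k] k :=
  LinearMap.mul' k k ∘ₗ TensorProduct.map εd (εH k H)



end CoproductGeneric

/-- the trivial right action `d·h = ε(h)d` -/
def trivActR {D : Type*} [AddCommGroup D] [Module k D] (H : Type*) [Ring H] [Bialgebra k H] :
    D ⊗[k] H →ₗ[k] D :=
  (TensorProduct.rid k D).toLinearMap ∘ₗ TensorProduct.map LinearMap.id (εH k H)

/-- the trivial right coaction `d ↦ d ⊗ 1` -/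
def trivCoactR {D : Type*} [AddCommGroup D] [Module k D] (H : Type*) [Ring H] [Bialgebra k H] :
    D →ₗ[k] D ⊗[k] H :=
  TensorProduct.map LinearMap.id (Algebra.linearMap k H) ∘ₗ (TensorProduct.rid k D).symm.toLinearMap

/-- the trivial left action `h·d = ε(h)d` -/
def trivActL {D : Type*} [AddCommGroup D] [Module k D] (H : Type*) [Ring H] [Bialgebra k H] :
    H ⊗[k] D →ₗ[k] D :=
  (TensorProduct.lid k D).toLinearMap ∘ₗ TensorProduct.map (εH k H) LinearMap.id

/-- the trivial left coaction `d ↦ 1 ⊗ d` -/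
def trivCoactL {D : Type*} [AddCommGroup D] [Module k D] (H : Type*) [Ring H] [Bialgebra k H] :
    D →ₗ[k] H ⊗[k] D :=
  TensorProduct.map (Algebra.linearMap k H) LinearMap.id ∘ₗ (TensorProduct.lid k D).symm.toLinearMap

section DoubleBiproduct
variable (H : Type*) [Ring H] [Bialgebra k H]
variable (A B : Type*) [Ring A] [Algebra k A] [Ring B] [Algebra k B]

/-- braiding of the left-left Yetter-Drinfeld category: `x ⊗ y ↦ x⁽⁻¹⁾·y ⊗ x⁽⁰⁾` -/
def braidYDl (cA : A →ₗ[k] H ⊗[k] A) (aA : H ⊗[k] A →ₗ[k] A) :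
    A ⊗[k] A →ₗ[k] A ⊗[k] A :=
  sw k A A ∘ₗ TensorProduct.map LinearMap.id aA ∘ₗ asl k A H A
    ∘ₗ TensorProduct.map (sw k H A) LinearMap.id ∘ₗ TensorProduct.map cA LinearMap.id

/-- braiding of the right-right Yetter-Drinfeld category: `x ⊗ y ↦ y⁽⁰⁾ ⊗ x·y⁽¹⁾` -/
def braidYDr (cB : B →ₗ[k] B ⊗[k] H) (aB : B ⊗[k] H →ₗ[k] B) :
    B ⊗[k] B →ₗ[k] B ⊗[k] B :=
  TensorProduct.map LinearMap.id aB ∘ₗ asl k B B H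
    ∘ₗ TensorProduct.map (sw k B B) LinearMap.id ∘ₗ asr k B B H
    ∘ₗ TensorProduct.map LinearMap.id cB

/-- `A` is a bialgebra in the left-left Yetter-Drinfeld category over `H` -/
def YDlBialgebra (aA : H ⊗[k] A →ₗ[k] A) (cA : A →ₗ[k] H ⊗[k] A)
    (ΔA : A →ₗ[k] A ⊗[k] A) (εA : A →ₗ[k] k) : Prop :=
  IsLeftModule k H aA ∧ IsLeftComodule k H cA ∧ CondYDl k H aA cA ∧
  IsLeftModuleAlgebra k H aA ∧
  (∀ a a' : A, cA (a * a')
      = TensorProduct.map (μH k H) (μD k) (tt k H A H A (cA a ⊗ₜ cA a'))) ∧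
  cA 1 = 1 ⊗ₜ 1 ∧ IsCoalg k ΔA εA ∧ CondCounitAlg k εA ∧
  (∀ (h : H) (a : A), εA (aA (h ⊗ₜ a)) = εH k H h * εA a) ∧ ΔA 1 = 1 ⊗ₜ 1 ∧
  (∀ (h : H) (a : A), ΔA (aA (h ⊗ₜ a))
      = TensorProduct.map aA aA (tt k H H A A (δH k H h ⊗ₜ ΔA a))) ∧
  IsLComodCoalg k H cA ΔA εA ∧
  ∀ a a' : A, ΔA (a * a')
      = TensorProduct.map (μD k) (μD k)
          (middle k (braidYDl k H A cA aA) (ΔA a ⊗ₜ ΔA a'))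

/-- `B` is a bialgebra in the right-right Yetter-Drinfeld category over `H` -/
def YDrBialgebra (aB : B ⊗[k] H →ₗ[k] B) (cB : B →ₗ[k] B ⊗[k] H)
    (ΔB : B →ₗ[k] B ⊗[k] B) (εB : B →ₗ[k] k) : Prop :=
  IsRightModule k H aB ∧ IsRightComodule k H cB ∧ CondYDr k H aB cB ∧
  IsRightModuleAlgebra k H aB ∧
  (∀ b b' : B, cB (b * b')
      = TensorProduct.map (μD k) (μH k H) (tt k B H B H (cB b ⊗ₜ cB b'))) ∧
  cB 1 = 1 ⊗ₜ 1 ∧ IsCoalg k ΔB εB ∧ CondCounitAlg k εB ∧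
  (∀ (b : B) (h : H), εB (aB (b ⊗ₜ h)) = εB b * εH k H h) ∧ ΔB 1 = 1 ⊗ₜ 1 ∧
  (∀ (b : B) (h : H), ΔB (aB (b ⊗ₜ h))
      = TensorProduct.map aB aB (tt k B B H H (ΔB b ⊗ₜ δH k H h))) ∧
  IsRComodCoalg k H cB ΔB εB ∧
  ∀ b b' : B, ΔB (b * b')
      = TensorProduct.map (μD k) (μD k)
          (middle k (braidYDr k H B cB aB) (ΔB b ⊗ₜ ΔB b'))

/-- the trivial-pairing condition `b² ▷ a² ⊗ b¹ ◁ a¹ = a ⊗ b` -/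
def PairingTrivial (aA : H ⊗[k] A →ₗ[k] A) (cA : A →ₗ[k] H ⊗[k] A)
    (aB : B ⊗[k] H →ₗ[k] B) (cB : B →ₗ[k] B ⊗[k] H) : Prop :=
  ∀ (a : A) (b : B),
    sw k B A (TensorProduct.map aB aA (tt k B H H A (cB b ⊗ₜ cA a))) = a ⊗ₜ b

/-- `Σ a(h₁ ▷ a') ⊗ h₂` -/
def P1 (aA : H ⊗[k] A →ₗ[k] A) (a : A) (h : H) (a' : A) : A ⊗[k] H :=
  TensorProduct.map (μD k) LinearMap.id
    ((TensorProduct.assoc k A A H).symm (a ⊗ₜ Yel k H aA h a'))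

/-- `Σ h'₁ ⊗ (b ◁ h'₂)b'` -/
def P2 (aB : B ⊗[k] H →ₗ[k] B) (b : B) (h' : H) (b' : B) : H ⊗[k] B :=
  TensorProduct.map LinearMap.id (μD k)
    (TensorProduct.assoc k H B B
      ((sw k B H
          (TensorProduct.map aB LinearMap.id
            ((TensorProduct.assoc k B H H).symm
              (TensorProduct.map LinearMap.id (sw k H H) (b ⊗ₜ δH k H h'))))) ⊗ₜ b'))

/-- `(x⊗u)⊗(v⊗y) ↦ (x ⊗ uv) ⊗ y` -/
def combineAHB : (A ⊗[k] H) ⊗[k] (H ⊗[k] B) →ₗ[k] (A ⊗[k] H) ⊗[k] B :=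
  TensorProduct.map (TensorProduct.map LinearMap.id (μH k H)) LinearMap.id
    ∘ₗ TensorProduct.map (asl k A H H) LinearMap.id
    ∘ₗ (TensorProduct.assoc k (A ⊗[k] H) H B).symm.toLinearMap

/-- the element `a(h₁▷a') # h₂h'₁ # (b◁h'₂)b'` of the double biproduct -/
def dblMulExpr (aA : H ⊗[k] A →ₗ[k] A) (aB : B ⊗[k] H →ₗ[k] B)
    (a : A) (h : H) (b : B) (a' : A) (h' : H) (b' : B) : (A ⊗[k] H) ⊗[k] B :=
  combineAHB k H A B (P1 k H A aA a h a' ⊗ₜ P2 k H B aB b h' b')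

/-- comultiplication map of the double biproduct:
`((a₁⊗a₂)⊗(h₁⊗h₂))⊗(b₁⊗b₂) ↦ (a₁ # a₂¹h₁ # b₁¹) ⊗ (a₂² # h₂b₁² # b₂)` -/
def Wd (cA : A →ₗ[k] H ⊗[k] A) (cB : B →ₗ[k] B ⊗[k] H) :
    ((A ⊗[k] A) ⊗[k] (H ⊗[k] H)) ⊗[k] (B ⊗[k] B) →ₗ[k]
      ((A ⊗[k] H) ⊗[k] B) ⊗[k] ((A ⊗[k] H) ⊗[k] B) :=
  TensorProduct.map LinearMap.id
      (TensorProduct.map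
          (TensorProduct.map LinearMap.id (μH k H) ∘ₗ asl k A H H ∘ₗ sw k H (A ⊗[k] H))
          LinearMap.id
        ∘ₗ (TensorProduct.assoc k H (A ⊗[k] H) B).symm.toLinearMap)
    ∘ₗ (TensorProduct.assoc k ((A ⊗[k] H) ⊗[k] B) H ((A ⊗[k] H) ⊗[k] B)).toLinearMap
    ∘ₗ TensorProduct.map (TensorProduct.assoc k (A ⊗[k] H) B H).symm.toLinearMap LinearMap.id
    ∘ₗ tt k (A ⊗[k] H) (A ⊗[k] H) (B ⊗[k] H) B
    ∘ₗ TensorProduct.map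
        (TensorProduct.map (TensorProduct.map LinearMap.id (μH k H) ∘ₗ asl k A H H) LinearMap.id)
        LinearMap.id
    ∘ₗ TensorProduct.map (tt k (A ⊗[k] H) A H H) LinearMap.id
    ∘ₗ TensorProduct.map
        (TensorProduct.map
          ((TensorProduct.assoc k A H A).symm.toLinearMap ∘ₗ TensorProduct.map LinearMap.id cA)
          LinearMap.id)
        (TensorProduct.map cB LinearMap.id)

/-- counit of the double biproduct -/
def dblCounit (εA : A →ₗ[k] k) (εB : B →ₗ[k] k) : (A ⊗[k] H) ⊗[k] B →ₗ[k] k :=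
  LinearMap.mul' k k
    ∘ₗ TensorProduct.map (LinearMap.mul' k k ∘ₗ TensorProduct.map εA (εH k H)) εB

/-- induced left action on `D = A ⊗ B` -/
def dActL (aA : H ⊗[k] A →ₗ[k] A) : H ⊗[k] (A ⊗[k] B) →ₗ[k] A ⊗[k] B :=
  TensorProduct.map aA LinearMap.id ∘ₗ asr k H A B

/-- induced right action on `D = A ⊗ B` -/
def dActR (aB : B ⊗[k] H →ₗ[k] B) : (A ⊗[k] B) ⊗[k] H →ₗ[k] A ⊗[k] B :=
  TensorProduct.map LinearMap.id aB ∘ₗ asl k A B H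

/-- induced left coaction on `D = A ⊗ B` -/
def dCoactL (cA : A →ₗ[k] H ⊗[k] A) : A ⊗[k] B →ₗ[k] H ⊗[k] (A ⊗[k] B) :=
  asl k H A B ∘ₗ TensorProduct.map cA LinearMap.id

/-- induced right coaction on `D = A ⊗ B` -/
def dCoactR (cB : B →ₗ[k] B ⊗[k] H) : A ⊗[k] B →ₗ[k] (A ⊗[k] B) ⊗[k] H :=
  asr k A B H ∘ₗ TensorProduct.map LinearMap.id cB

/-- tensor product comultiplication on `D = A ⊗ B` -/
def dComul (ΔA : A →ₗ[k] A ⊗[k] A) (ΔB : B →ₗ[k] B ⊗[k] B) :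
    A ⊗[k] B →ₗ[k] (A ⊗[k] B) ⊗[k] (A ⊗[k] B) :=
  tt k A A B B ∘ₗ TensorProduct.map ΔA ΔB

/-- tensor product counit on `D = A ⊗ B` -/
def dCounit (εA : A →ₗ[k] k) (εB : B →ₗ[k] k) : A ⊗[k] B →ₗ[k] k :=
  LinearMap.mul' k k ∘ₗ TensorProduct.map εA εB

/-- `(a ⊗ b) ⊗ h ↦ (a ⊗ h) ⊗ b` -/
def phiAB : (A ⊗[k] B) ⊗[k] H →ₗ[k] (A ⊗[k] H) ⊗[k] B :=
  asr k A H B ∘ₗ TensorProduct.map LinearMap.id (sw k B H) ∘ₗ asl k A B H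

end DoubleBiproduct

section Pointwise
variable (H : Type*) [Ring H] [Bialgebra k H]
variable (M N : Type*) [AddCommGroup M] [Module k M] [AddCommGroup N] [Module k N]

/-- left action on `M ⊗ N` through the first factor -/
def pActL (aLM : H ⊗[k] M →ₗ[k] M) : H ⊗[k] (M ⊗[k] N) →ₗ[k] M ⊗[k] N :=
  TensorProduct.map aLM LinearMap.id ∘ₗ asr k H M N

/-- right action on `M ⊗ N` through the second factor -/
def pActR (aRN : N ⊗[k] H →ₗ[k] N) : (M ⊗[k] N) ⊗[k] H →ₗ[k] M ⊗[k] N :=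
  TensorProduct.map LinearMap.id aRN ∘ₗ asl k M N H

/-- left coaction on `M ⊗ N` through the first factor -/
def pCoactL (cLM : M →ₗ[k] H ⊗[k] M) : M ⊗[k] N →ₗ[k] H ⊗[k] (M ⊗[k] N) :=
  asl k H M N ∘ₗ TensorProduct.map cLM LinearMap.id

/-- right coaction on `M ⊗ N` through the second factor -/
def pCoactR (cRN : N →ₗ[k] N ⊗[k] H) : M ⊗[k] N →ₗ[k] (M ⊗[k] N) ⊗[k] H :=
  asr k M N H ∘ₗ TensorProduct.map LinearMap.id cRN

end Pointwise

section Identities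
variable (H : Type*) [Ring H] [Bialgebra k H]
variable (D : Type*) [Ring D] [Algebra k D]

/-- `c₂ ⊗ (h₁ ⊗ (d₁⁽⁰⁾ ⊗ d₁⁽¹⁾)) ↦ (c₂⁽⁻¹⁾h₁·d₁⁽⁰⁾) ⊗ (c₂⁽⁰⁾·d₁⁽¹⁾)` -/
def Fmap (aL : H ⊗[k] D →ₗ[k] D) (aR : D ⊗[k] H →ₗ[k] D) (cL : D →ₗ[k] H ⊗[k] D) :
    D ⊗[k] (H ⊗[k] (D ⊗[k] H)) →ₗ[k] D ⊗[k] D :=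
  TensorProduct.map aL LinearMap.id
    ∘ₗ asr k H D D
    ∘ₗ TensorProduct.map LinearMap.id
        (sw k D D ∘ₗ TensorProduct.map aR LinearMap.id ∘ₗ asr k D H D
          ∘ₗ TensorProduct.map LinearMap.id (sw k D H))
    ∘ₗ TensorProduct.map (μH k H) LinearMap.id
    ∘ₗ tt k H D H (D ⊗[k] H)
    ∘ₗ TensorProduct.map cL LinearMap.id

/-- `(h₁⊗h₂)⊗(c⊗d) ↦ [c(h₁·d)]₁ ⊗ ([c(h₁·d)]₂⁽⁻¹⁾h₂ ⊗ [c(h₁·d)]₂⁽⁰⁾)` -/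
def L3map (aL : H ⊗[k] D →ₗ[k] D) (cL : D →ₗ[k] H ⊗[k] D) (Δd : D →ₗ[k] D ⊗[k] D) :
    (H ⊗[k] H) ⊗[k] (D ⊗[k] D) →ₗ[k] D ⊗[k] (H ⊗[k] D) :=
  TensorProduct.map LinearMap.id (TensorProduct.map (μH k H) LinearMap.id)
    ∘ₗ TensorProduct.map LinearMap.id (asr k H H D)
    ∘ₗ asl k D H (H ⊗[k] D)
    ∘ₗ tt k D H H D
    ∘ₗ TensorProduct.map (sw k H D) LinearMap.id
    ∘ₗ asr k H D (H ⊗[k] D)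
    ∘ₗ TensorProduct.map LinearMap.id (TensorProduct.map LinearMap.id cL)
    ∘ₗ TensorProduct.map LinearMap.id Δd
    ∘ₗ TensorProduct.map LinearMap.id (μD k)
    ∘ₗ asl k H D D
    ∘ₗ TensorProduct.map LinearMap.id aL
    ∘ₗ tt k H H D D
    ∘ₗ TensorProduct.map (sw k H H) LinearMap.id

/-- `((h₁⊗h₂)⊗h₃)⊗((c₁⊗c₂)⊗(d₁⊗d₂)) ↦`
`c₁(c₂⁽⁻¹⁾h₁·d₁⁽⁰⁾) ⊗ (c₂⁽⁰⁾⁽⁻¹⁾h₂d₂⁽⁻¹⁾ ⊗ (c₂⁽⁰⁾⁽⁰⁾·d₁⁽¹⁾)(h₃·d₂⁽⁰⁾))` -/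
def R3map (aL : H ⊗[k] D →ₗ[k] D) (aR : D ⊗[k] H →ₗ[k] D)
    (cL : D →ₗ[k] H ⊗[k] D) (cR : D →ₗ[k] D ⊗[k] H) :
    ((H ⊗[k] H) ⊗[k] H) ⊗[k] ((D ⊗[k] D) ⊗[k] (D ⊗[k] D)) →ₗ[k]
      D ⊗[k] (H ⊗[k] D) :=
  TensorProduct.map (μD k) LinearMap.id
    ∘ₗ asr k D D (H ⊗[k] D)
    ∘ₗ TensorProduct.map LinearMap.id
        (asl k D H D
          ∘ₗ TensorProduct.map LinearMap.id (μD k)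
          ∘ₗ TensorProduct.map (TensorProduct.map aL (μH k H)) (TensorProduct.map aR aL)
          ∘ₗ TensorProduct.map (tt k H H D H) (tt k D H H D)
          ∘ₗ tt k (H ⊗[k] H) (D ⊗[k] H) (D ⊗[k] H) (H ⊗[k] D)
          ∘ₗ TensorProduct.map LinearMap.id (tt k D H H D))
    ∘ₗ asl k D ((H ⊗[k] H) ⊗[k] (D ⊗[k] H)) ((D ⊗[k] H) ⊗[k] (H ⊗[k] D))
    ∘ₗ TensorProduct.map
        (TensorProduct.map LinearMap.id
          (TensorProduct.map (TensorProduct.map (μH k H) (μH k H)) LinearMap.id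
            ∘ₗ TensorProduct.map (tt k H H H H) LinearMap.id
            ∘ₗ tt k (H ⊗[k] H) D (H ⊗[k] H) H))
        LinearMap.id
    ∘ₗ TensorProduct.map (asl k D ((H ⊗[k] H) ⊗[k] D) ((H ⊗[k] H) ⊗[k] H)) LinearMap.id
    ∘ₗ TensorProduct.map (sw k ((H ⊗[k] H) ⊗[k] H) (D ⊗[k] ((H ⊗[k] H) ⊗[k] D))) LinearMap.id
    ∘ₗ asr k ((H ⊗[k] H) ⊗[k] H) (D ⊗[k] ((H ⊗[k] H) ⊗[k] D))
        ((D ⊗[k] H) ⊗[k] (H ⊗[k] D))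
    ∘ₗ TensorProduct.map LinearMap.id
        (TensorProduct.map (TensorProduct.map LinearMap.id (asr k H H D)) LinearMap.id)
    ∘ₗ TensorProduct.map LinearMap.id
        (TensorProduct.map
          (TensorProduct.map LinearMap.id (TensorProduct.map LinearMap.id cL ∘ₗ cL))
          (TensorProduct.map cR cL))

end Identities

section Radford
variable (H : Type*) [Ring H] [Bialgebra k H]
variable (D : Type*) [Ring D] [Algebra k D]

/-- Radford's admissible-pair conditions for a left module algebra, left comodule
coalgebra `D` -/
def RadfordAdmissible (aL : H ⊗[k] D →ₗ[k] D) (cL : D →ₗ[k] H ⊗[k] D)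
    (Δd : D →ₗ[k] D ⊗[k] D) (εd : D →ₗ[k] k) : Prop :=
  IsLeftModule k H aL ∧ IsLeftModuleAlgebra k H aL ∧ IsLeftComodule k H cL ∧
  IsCoalg k Δd εd ∧ IsLComodCoalg k H cL Δd εd ∧ CondCounitAlg k εd ∧
  (∀ (h : H) (d : D), εd (aL (h ⊗ₜ d)) = εH k H h * εd d) ∧
  Δd 1 = 1 ⊗ₜ 1 ∧ cL 1 = 1 ⊗ₜ 1 ∧
  (∀ c d : D, cL (c * d)
      = TensorProduct.map (μH k H) (μD k) (tt k H D H D (cL c ⊗ₜ cL d))) ∧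
  (∀ (h : H) (d : D), Δd (aL (h ⊗ₜ d))
      = TensorProduct.map aL aL (tt k H H D D (δH k H h ⊗ₜ Δd d))) ∧
  (∀ c d : D, Δd (c * d)
      = TensorProduct.map (μD k) (μD k)
          (middle k (braidYDl k H D cL aL) (Δd c ⊗ₜ Δd d))) ∧
  CondYDl k H aL cL

/-- the element `d(h₁·d') ⊗ h₂h'` of the Radford biproduct -/
def radMulExpr (aL : H ⊗[k] D →ₗ[k] D) (d : D) (h : H) (d' : D) (h' : H) : D ⊗[k] H :=
  TensorProduct.map (μD k) (μH k H ∘ₗ sw k H H)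
    (tt k D H D H ((d ⊗ₜ h') ⊗ₜ Yel k H aL h d'))

/-- comultiplication map of the Radford biproduct:
`(d₁⊗d₂)⊗(h₁⊗h₂) ↦ (d₁ ⊗ d₂⁽⁻¹⁾h₁) ⊗ (d₂⁽⁰⁾ ⊗ h₂)` -/
def WRad (cL : D →ₗ[k] H ⊗[k] D) :
    (D ⊗[k] D) ⊗[k] (H ⊗[k] H) →ₗ[k] (D ⊗[k] H) ⊗[k] (D ⊗[k] H) :=
  TensorProduct.map (TensorProduct.map LinearMap.id (μH k H) ∘ₗ asl k D H H) LinearMap.id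
    ∘ₗ tt k (D ⊗[k] H) D H H
    ∘ₗ TensorProduct.map (asr k D H D) LinearMap.id
    ∘ₗ TensorProduct.map (TensorProduct.map LinearMap.id cL) LinearMap.id

/-- `(h₁·d) ⊗ h₂` reversed version: `(h₂·d) ⊗ h₁` -/
def Y2el (aL : H ⊗[k] D →ₗ[k] D) (h : H) (d : D) : D ⊗[k] H :=
  TensorProduct.comm k H D
    (TensorProduct.map LinearMap.id aL (TensorProduct.assoc k H H D (δH k H h ⊗ₜ d)))

/-- `(d·h₁) ⊗ h₂` -/
def X1el (aR : D ⊗[k] H →ₗ[k] D) (d : D) (h : H) : D ⊗[k] H :=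
  TensorProduct.map aR LinearMap.id ((TensorProduct.assoc k D H H).symm (d ⊗ₜ δH k H h))

end Radford
end LRPaper

/-! In Sweedler notation both bracketings of `(d ⊗ h)(d' ⊗ h')(d'' ⊗ h'')` reduce, by the
module-algebra and bimodule axioms, to
`(d·h'₃h''₂) ((h₁·d')·h''₃) ((h₂h'₁)·d'') ⊗ h₃h'₂h''₁`,
a 9-linear expression in the iterated coproducts of `h`, `h'`, `h''`. The two bracketings reach it
through different iterations, `(id ⊗ Δ)Δ` or `(Δ ⊗ id)Δ`, of each coproduct, and coassociativity
identifies them. The unit laws are counitality together with `h·1 = ε(h)1 = 1·h`. -/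

namespace LRPaper

open Coalgebra

section Sweedler

variable {k H : Type*} [CommRing k] [Ring H] [Bialgebra k H]

variable (k H) in
@[simps]
protected def _root_.Coalgebra.Repr.one : Repr k (1 : H) Unit where
  index := {()}
  left _ := 1
  right _ := 1
  eq := by simp [Algebra.TensorProduct.one_def]

variable (k) in
def comul₂ (x : H) : H ⊗[k] (H ⊗[k] H) := comul.lTensor H (comul x)

lemma comul₂_eq_sum_right {ι : Type*} {κ : ι → Type*} {x : H} (r : Repr k x ι)
    (rr : (i : ι) → Repr k (r.right i) (κ i)) :
    comul₂ k x = ∑ i ∈ r.index, ∑ n ∈ (rr i).index,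
      r.left i ⊗ₜ[k] ((rr i).left n ⊗ₜ[k] (rr i).right n) := by
  rw [comul₂, ← r.eq, map_sum]
  refine Finset.sum_congr rfl fun i _ => ?_
  rw [LinearMap.lTensor_tmul, ← (rr i).eq, tmul_sum]

lemma comul₂_eq_sum_left {ι : Type*} {κ : ι → Type*} {x : H} (r : Repr k x ι)
    (rl : (i : ι) → Repr k (r.left i) (κ i)) :
    comul₂ k x = ∑ i ∈ r.index, ∑ n ∈ (rl i).index,
      (rl i).left n ⊗ₜ[k] ((rl i).right n ⊗ₜ[k] r.right i) := by
  rw [comul₂_eq_sum_right r fun i => ℛ k (r.right i), sum_tmul_tmul_eq r rl]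

lemma sum_counit_right_smul {ι : Type*} {a : H} (r : Repr k a ι) :
    ∑ i ∈ r.index, counit (R := k) (r.right i) • r.left i = a := by
  have h := congr(TensorProduct.rid k H $(sum_tmul_counit_eq r))
  simpa only [map_sum, TensorProduct.rid_tmul, one_smul] using h

end Sweedler

section SmashProduct

variable {k H D : Type*} [CommRing k] [Ring H] [Bialgebra k H] [Ring D] [Algebra k D]
  (aL : H ⊗[k] D →ₗ[k] D) (aR : D ⊗[k] H →ₗ[k] D)

lemma smashMulExpr_eq_sum {ι κ : Type*} {h h' : H} (r : Repr k h ι) (r' : Repr k h' κ)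
    (d d' : D) :
    smashMulExpr k H aL aR d h d' h'
      = ∑ i ∈ r.index, ∑ j ∈ r'.index,
          (aR (d ⊗ₜ r'.right j) * aL (r.left i ⊗ₜ d')) ⊗ₜ[k] (r.right i * r'.left j) := by
  rw [smashMulExpr, Xel, Yel, δH, ← r.eq, ← r'.eq]
  simp only [map_sum, sum_tmul, tmul_sum, TensorProduct.map_tmul, assoc_tmul, assoc_symm_tmul,
    comm_tmul, tensorTensorTensorComm_tmul, LinearMap.mul'_apply, sw, tt, μD, μH,
    LinearMap.coe_comp, LinearEquiv.coe_coe, Function.comp_apply, LinearMap.id_coe, id_eq]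

variable {aL aR}

lemma IsLeftModuleAlgebra.apply_mul_eq_sum (hla : IsLeftModuleAlgebra k H aL) {ι : Type*}
    {w : H} (r : Repr k w ι) (c e : D) :
    aL (w ⊗ₜ (c * e)) = ∑ i ∈ r.index, aL (r.left i ⊗ₜ c) * aL (r.right i ⊗ₜ e) := by
  rw [hla.2 w c e, δH, ← r.eq]
  simp [tt, μD, sum_tmul]

lemma IsRightModuleAlgebra.apply_mul_eq_sum (hra : IsRightModuleAlgebra k H aR) {ι : Type*}
    {w : H} (r : Repr k w ι) (c e : D) :
    aR ((c * e) ⊗ₜ w) = ∑ i ∈ r.index, aR (c ⊗ₜ r.left i) * aR (e ⊗ₜ r.right i) := by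
  rw [hra.2 c e w, δH, ← r.eq]
  simp [tt, μD, tmul_sum]

lemma smashMulExpr_one_one_left (hL : IsLeftModule k H aL) (hra : IsRightModuleAlgebra k H aR)
    (d' : D) (h' : H) : smashMulExpr k H aL aR 1 1 d' h' = d' ⊗ₜ h' := by
  rw [smashMulExpr_eq_sum aL aR (Repr.one k H) (ℛ k h')]
  simp only [Repr.one_index, Repr.one_left, Repr.one_right, hra.1, εH, hL.1,
    Algebra.smul_mul_assoc, one_mul, Finset.sum_const, Finset.card_singleton, one_smul]
  conv_rhs => rw [← sum_counit_right_smul (ℛ k h'), tmul_sum]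
  exact Finset.sum_congr rfl fun i _ => smul_tmul _ _ _

lemma smashMulExpr_one_one_right (hR : IsRightModule k H aR) (hla : IsLeftModuleAlgebra k H aL)
    (d : D) (h : H) : smashMulExpr k H aL aR d h 1 1 = d ⊗ₜ h := by
  rw [smashMulExpr_eq_sum aL aR (ℛ k h) (Repr.one k H)]
  simp only [Repr.one_index, Repr.one_left, Repr.one_right, hR.1, hla.1, εH,
    Algebra.mul_smul_comm, mul_one, Finset.sum_const, Finset.card_singleton, one_smul]
  conv_rhs => rw [← sum_counit_smul (ℛ k h), tmul_sum]
  exact Finset.sum_congr rfl fun i _ => smul_tmul _ _ _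

variable (aL aR) in
def smashTriple (d d' d'' : D) :
    (H ⊗[k] (H ⊗[k] H)) ⊗[k] ((H ⊗[k] (H ⊗[k] H)) ⊗[k] (H ⊗[k] (H ⊗[k] H))) →ₗ[k] D ⊗[k] H :=
  TensorProduct.map (μD k ∘ₗ sw k D D) LinearMap.id
    ∘ₗ asr k D D H
    ∘ₗ TensorProduct.map LinearMap.id (sw k H D)
    ∘ₗ TensorProduct.map (μD k) LinearMap.id
    ∘ₗ TensorProduct.map
        (TensorProduct.map
          (aR ∘ₗ LinearMap.rTensor H (aL ∘ₗ (TensorProduct.mk k H D).flip d'))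
          (aL ∘ₗ (TensorProduct.mk k H D).flip d'' ∘ₗ μH k H))
        (TensorProduct.map
          (μH k H ∘ₗ LinearMap.lTensor H (μH k H))
          (aR ∘ₗ TensorProduct.mk k D H d ∘ₗ μH k H))
    ∘ₗ TensorProduct.map
        (tt k H H H H ∘ₗ TensorProduct.map LinearMap.id (sw k H H))
        (asr k H (H ⊗[k] H) (H ⊗[k] H))
    ∘ₗ tt k (H ⊗[k] H) H (H ⊗[k] H) ((H ⊗[k] H) ⊗[k] (H ⊗[k] H))
    ∘ₗ TensorProduct.map (asr k H H H)
        (TensorProduct.map LinearMap.id (tt k H H H H)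
          ∘ₗ tt k H (H ⊗[k] H) H (H ⊗[k] H)
          ∘ₗ TensorProduct.map LinearMap.id (sw k (H ⊗[k] H) H ∘ₗ asr k H H H))

@[simp]
lemma smashTriple_tmul (d d' d'' : D) (x₁ x₂ x₃ y₁ y₂ y₃ z₁ z₂ z₃ : H) :
    smashTriple aL aR d d' d''
        ((x₁ ⊗ₜ (x₂ ⊗ₜ x₃)) ⊗ₜ ((y₁ ⊗ₜ (y₂ ⊗ₜ y₃)) ⊗ₜ (z₁ ⊗ₜ (z₂ ⊗ₜ z₃))))
      = (aR (d ⊗ₜ (y₃ * z₂)) * (aR (aL (x₁ ⊗ₜ d') ⊗ₜ z₃) * aL ((x₂ * y₁) ⊗ₜ d'')))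
          ⊗ₜ[k] (x₃ * (y₂ * z₁)) := by
  simp [smashTriple, tt, sw, asr, μD, μH]

variable (μs : (D ⊗[k] H) ⊗[k] (D ⊗[k] H) →ₗ[k] D ⊗[k] H)
  (hμ : ∀ (d : D) (h : H) (d' : D) (h' : H),
    μs ((d ⊗ₜ h) ⊗ₜ (d' ⊗ₜ h')) = smashMulExpr k H aL aR d h d' h')
include hμ

lemma mul_tmul_eq_smashTriple (hR : IsRightModule k H aR) (hra : IsRightModuleAlgebra k H aR)
    (d d' d'' : D) (h h' h'' : H) :
    μs (μs ((d ⊗ₜ h) ⊗ₜ (d' ⊗ₜ h')) ⊗ₜ (d'' ⊗ₜ h''))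
      = smashTriple aL aR d d' d'' (comul₂ k h ⊗ₜ (comul₂ k h' ⊗ₜ comul₂ k h'')) := by
  let r := ℛ k h
  let r' := ℛ k h'
  let r'' := ℛ k h''
  let rr := fun i => ℛ k (r.right i)
  let rl' := fun j => ℛ k (r'.left j)
  let rr'' := fun m => ℛ k (r''.right m)
  rw [comul₂_eq_sum_right r rr]
  simp only [sum_tmul, map_sum]
  rw [comul₂_eq_sum_left r' rl']
  simp only [sum_tmul, tmul_sum, map_sum]
  rw [comul₂_eq_sum_right r'' rr'']
  simp only [tmul_sum, map_sum, smashTriple_tmul]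
  rw [hμ, smashMulExpr_eq_sum aL aR r r']
  simp only [sum_tmul, map_sum, hμ]
  refine Finset.sum_congr rfl fun i _ => ?_
  conv_rhs => rw [Finset.sum_comm]
  refine Finset.sum_congr rfl fun j _ => ?_
  rw [smashMulExpr_eq_sum aL aR ((rr i).mul (rl' j)) r'', Repr.mul_index, Finset.sum_product]
  refine Finset.sum_congr rfl fun n _ => Finset.sum_congr rfl fun l _ =>
    Finset.sum_congr rfl fun m _ => ?_
  rw [hra.apply_mul_eq_sum (rr'' m), Finset.sum_mul, sum_tmul]
  simp only [Repr.mul_left, Repr.mul_right, ← hR.2, mul_assoc]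

lemma tmul_mul_eq_smashTriple (hbim : IsBimodule k H aL aR) (hla : IsLeftModuleAlgebra k H aL)
    (d d' d'' : D) (h h' h'' : H) :
    μs ((d ⊗ₜ h) ⊗ₜ μs ((d' ⊗ₜ h') ⊗ₜ (d'' ⊗ₜ h'')))
      = smashTriple aL aR d d' d'' (comul₂ k h ⊗ₜ (comul₂ k h' ⊗ₜ comul₂ k h'')) := by
  let r := ℛ k h
  let r' := ℛ k h'
  let r'' := ℛ k h''
  let rl := fun i => ℛ k (r.left i)
  let rr' := fun j => ℛ k (r'.right j)
  let rl'' := fun m => ℛ k (r''.left m)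
  rw [comul₂_eq_sum_right r' rr']
  simp only [sum_tmul, tmul_sum, map_sum]
  rw [comul₂_eq_sum_left r'' rl'']
  simp only [tmul_sum, map_sum]
  rw [comul₂_eq_sum_left r rl]
  simp only [sum_tmul, map_sum, smashTriple_tmul]
  rw [hμ d' h' d'' h'', smashMulExpr_eq_sum aL aR r' r'']
  simp only [tmul_sum, map_sum, hμ]
  refine Finset.sum_congr rfl fun j _ => ?_
  conv_rhs => rw [Finset.sum_comm]
  refine Finset.sum_congr rfl fun m _ => ?_
  rw [smashMulExpr_eq_sum aL aR r ((rr' j).mul (rl'' m)), Repr.mul_index, Finset.sum_comm,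
    Finset.sum_product]
  refine Finset.sum_congr rfl fun s _ => Finset.sum_congr rfl fun t _ =>
    Finset.sum_congr rfl fun i _ => ?_
  rw [hla.apply_mul_eq_sum (rl i), Finset.mul_sum, sum_tmul]
  simp only [Repr.mul_left, Repr.mul_right, ← hbim.2.2, ← hbim.1.2]

end SmashProduct

/-- the L-R-smash product `D ♮ H` is an associative unital algebra. -/
theorem lr_smash_product_is_algebra
    {k : Type*} [CommRing k] {H : Type*} [Ring H] [Bialgebra k H]
    {D : Type*} [Ring D] [Algebra k D]
    (aL : H ⊗[k] D →ₗ[k] D) (aR : D ⊗[k] H →ₗ[k] D)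
    (hbim : IsBimodule k H aL aR)
    (hla : IsLeftModuleAlgebra k H aL) (hra : IsRightModuleAlgebra k H aR)
    (μs : (D ⊗[k] H) ⊗[k] (D ⊗[k] H) →ₗ[k] D ⊗[k] H)
    (hμ : ∀ (d : D) (h : H) (d' : D) (h' : H),
      μs ((d ⊗ₜ h) ⊗ₜ (d' ⊗ₜ h')) = smashMulExpr k H aL aR d h d' h') :
    (∀ x y z : D ⊗[k] H, μs (μs (x ⊗ₜ y) ⊗ₜ z) = μs (x ⊗ₜ μs (y ⊗ₜ z))) ∧
    (∀ x : D ⊗[k] H, μs (((1 : D) ⊗ₜ (1 : H)) ⊗ₜ x) = x) ∧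
    (∀ x : D ⊗[k] H, μs (x ⊗ₜ ((1 : D) ⊗ₜ (1 : H))) = x) := by
  have hassoc : μs ∘ₗ TensorProduct.map μs LinearMap.id
      = μs ∘ₗ TensorProduct.map LinearMap.id μs ∘ₗ (TensorProduct.assoc k _ _ _).toLinearMap := by
    ext d h d' h' d'' h''
    simpa using (mul_tmul_eq_smashTriple μs hμ hbim.2.1 hra d d' d'' h h' h'').trans
      (tmul_mul_eq_smashTriple μs hμ hbim hla d d' d'' h h' h'').symm
  have hone_mul : μs ∘ₗ TensorProduct.mk k _ _ ((1 : D) ⊗ₜ (1 : H)) = LinearMap.id := by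
    ext d' h'
    simpa [hμ] using smashMulExpr_one_one_left hbim.1 hra d' h'
  have hmul_one : μs ∘ₗ (TensorProduct.mk k _ _).flip ((1 : D) ⊗ₜ (1 : H)) = LinearMap.id := by
    ext d h
    simpa [hμ] using smashMulExpr_one_one_right hbim.2.1 hla d h
  exact ⟨fun x y z => by simpa using LinearMap.congr_fun hassoc ((x ⊗ₜ y) ⊗ₜ z),
    LinearMap.congr_fun hone_mul, LinearMap.congr_fun hmul_one⟩

end LRPaper
end
end

section
/- Let H be a bialgebra and D an H-bicomodule coalgebra, i.e., D is a coalgebra with a left coaction λ(d) = d⁽⁻¹⁾ ⊗ d⁽⁰⁾ and right coaction ρ(d) = d⁽⁰⁾' ⊗ d⁽¹⁾' making D a bicomodule, such that both coactions are coalgebra maps in the comodule sense: d₁⁽⁻¹⁾d₂⁽⁻¹⁾ ⊗ d₁⁽⁰⁾ ⊗ d₂⁽⁰⁾ = d⁽⁻¹⁾ ⊗ (d⁽⁰⁾)₁ ⊗ (d⁽⁰⁾)₂, d⁽⁻¹⁾ε_D(d⁽⁰⁾) = ε_D(d)1_H, and the analogous conditions on the right. Then D ⊗ H with comultiplication Δ(d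 ⊗ h) = (d₁^{<0>} ⊗ d₂^{(-1)}h₁) ⊗ (d₂^{(0)} ⊗ h₂d₁^{<1>}) and counit ε(d ⊗ h) = ε_D(d)ε_H(h) is a coassociative counital coalgebra (the L-R-smash coproduct). -/
open TensorProduct
noncomputable section
/-!
With `θ(d) = (d₁⁽⁰⁾ ⊗ d₁⁽¹⁾) ⊗ (d₂⁽⁻¹⁾ ⊗ d₂⁽⁰⁾)`, the comultiplication of `D ⊗ H` is
`smashMix ∘ (θ ⊗ Δ_H)`, where `smashMix` only permutes tensor factors and multiplies in `H`.
Since `Δ_H` is multiplicative, the outer comultiplication of either iterate passes through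
`smashMix`. The comodule-coalgebra conditions express `θ(d⁽⁰⁾) ⊗ d⁽¹⁾` and `d⁽⁻¹⁾ ⊗ θ(d⁽⁰⁾)`
through `Δ_D`; with the (bi)comodule axioms and coassociativity of `Δ_D` and `Δ_H`, both
iterates become structural maps applied to `iteratedCoaction d ⊗ h₁ ⊗ h₂ ⊗ h₃`, and these
agree on pure tensors. For the counit, `ε` turns `d₁⁽⁰⁾ ⊗ d₁⁽¹⁾` into `ε(d₁)1` and
`d₂⁽⁻¹⁾ ⊗ d₂⁽⁰⁾` into `d₂`.
-/

open scoped RingTheory.LinearMap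

lemma TensorProduct.map_comp_map_assoc {R M N P Q M' N' Z : Type*} [CommSemiring R]
    [AddCommMonoid M] [Module R M] [AddCommMonoid N] [Module R N] [AddCommMonoid P] [Module R P]
    [AddCommMonoid Q] [Module R Q] [AddCommMonoid M'] [Module R M'] [AddCommMonoid N']
    [Module R N'] [AddCommMonoid Z] [Module R Z] (f₂ : P →ₗ[R] M') (g₂ : Q →ₗ[R] N')
    (f₁ : M →ₗ[R] P) (g₁ : N →ₗ[R] Q) (X : Z →ₗ[R] M ⊗[R] N) :
    (f₂ ⊗ₘ g₂) ∘ₗ (f₁ ⊗ₘ g₁) ∘ₗ X = (f₂ ∘ₗ f₁ ⊗ₘ g₂ ∘ₗ g₁) ∘ₗ X := by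
  rw [← LinearMap.comp_assoc, TensorProduct.map_comp]

namespace LRPaper

section Mix

variable {k : Type*} [CommRing k]
variable {X Y A B : Type*} [AddCommGroup X] [Module k X] [AddCommGroup Y] [Module k Y]
  [Ring A] [Algebra k A] [Ring B] [Algebra k B]

def smashMix :
    ((X ⊗[k] B) ⊗[k] (A ⊗[k] Y)) ⊗[k] (A ⊗[k] B) →ₗ[k] (X ⊗[k] A) ⊗[k] (Y ⊗[k] B) :=
  (((LinearMap.id ⊗ₘ LinearMap.mul' k A) ∘ₗ asl k X A A) ⊗ₘ
      ((LinearMap.id ⊗ₘ (LinearMap.mul' k B ∘ₗ sw k B B)) ∘ₗ asl k Y B B ∘ₗ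
        (sw k B Y ⊗ₘ LinearMap.id)))
    ∘ₗ tt k (X ⊗[k] A) (B ⊗[k] Y) A B ∘ₗ (tt k X B A Y ⊗ₘ LinearMap.id)

@[simp] lemma smashMix_tmul (x : X) (b : B) (a : A) (y : Y) (a' : A) (b' : B) :
    smashMix (((x ⊗ₜ[k] b) ⊗ₜ[k] (a ⊗ₜ[k] y)) ⊗ₜ[k] (a' ⊗ₜ[k] b'))
      = (x ⊗ₜ (a * a')) ⊗ₜ (y ⊗ₜ (b' * b)) := by
  simp [smashMix, tt, asl, sw]

variable {X' Y' A' B' : Type*} [AddCommGroup X'] [Module k X'] [AddCommGroup Y'] [Module k Y']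
  [Ring A'] [Algebra k A'] [Ring B'] [Algebra k B']

lemma map_map_id_comp_smashMix (f : X →ₗ[k] X') {φ : A →ₗ[k] A'}
    (hφ : ∀ a a', φ (a * a') = φ a * φ a') :
    ((f ⊗ₘ φ) ⊗ₘ (LinearMap.id : Y ⊗[k] B →ₗ[k] Y ⊗[k] B)) ∘ₗ smashMix
      = smashMix ∘ₗ (((f ⊗ₘ LinearMap.id) ⊗ₘ (φ ⊗ₘ LinearMap.id)) ⊗ₘ (φ ⊗ₘ LinearMap.id)) := by
  ext; simp [hφ]

lemma map_id_map_comp_smashMix (g : Y →ₗ[k] Y') {ψ : B →ₗ[k] B'}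
    (hψ : ∀ b b', ψ (b * b') = ψ b * ψ b') :
    ((LinearMap.id : X ⊗[k] A →ₗ[k] X ⊗[k] A) ⊗ₘ (g ⊗ₘ ψ)) ∘ₗ smashMix
      = smashMix ∘ₗ (((LinearMap.id ⊗ₘ ψ) ⊗ₘ (LinearMap.id ⊗ₘ g)) ⊗ₘ (LinearMap.id ⊗ₘ ψ)) := by
  ext; simp [hψ]

end Mix

section SmashCoproduct

variable {k : Type*} [CommRing k] {H : Type*} [Ring H] [Bialgebra k H]
  {D : Type*} [AddCommGroup D] [Module k D]

lemma Wmap_eq_smashMix_comp (cL : D →ₗ[k] H ⊗[k] D) (cR : D →ₗ[k] D ⊗[k] H) :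
    Wmap k H cL cR = smashMix ∘ₗ ((cR ⊗ₘ cL) ⊗ₘ LinearMap.id) := rfl

@[simp] lemma μH_tmul (a b : H) : μH k H (a ⊗ₜ b) = a * b := LinearMap.mul'_apply

lemma δH_mul (a b : H) : δH k H (a * b) = δH k H a * δH k H b := Bialgebra.comul_mul a b

lemma rTensor_δH_comp_δH :
    (δH k H ⊗ₘ LinearMap.id) ∘ₗ δH k H = asr k H H H ∘ₗ (LinearMap.id ⊗ₘ δH k H) ∘ₗ δH k H :=
  Coalgebra.coassoc_symm.symm

lemma lid_rTensor_εH_δH (h : H) :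
    TensorProduct.lid k H ((εH k H ⊗ₘ LinearMap.id) (δH k H h)) = h := by
  rw [show (εH k H ⊗ₘ LinearMap.id) (δH k H h) = 1 ⊗ₜ h from Coalgebra.rTensor_counit_comul h]
  simp

lemma rid_lTensor_εH_δH (h : H) :
    TensorProduct.rid k H ((LinearMap.id ⊗ₘ εH k H) (δH k H h)) = h := by
  rw [show (LinearMap.id ⊗ₘ εH k H) (δH k H h) = h ⊗ₜ 1 from Coalgebra.lTensor_counit_comul h]
  simp

variable {cL : D →ₗ[k] H ⊗[k] D} {cR : D →ₗ[k] D ⊗[k] H} {Δd : D →ₗ[k] D ⊗[k] D}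
  {εd : D →ₗ[k] k}

lemma IsLeftComodule.rTensor_comp (h : IsLeftComodule k H cL) :
    (δH k H ⊗ₘ LinearMap.id) ∘ₗ cL = asr k H H D ∘ₗ (LinearMap.id ⊗ₘ cL) ∘ₗ cL :=
  LinearMap.ext fun m => by simp [asr, h.2 m]

lemma IsRightComodule.rTensor_comp (h : IsRightComodule k H cR) :
    (cR ⊗ₘ LinearMap.id) ∘ₗ cR = asr k D H H ∘ₗ (LinearMap.id ⊗ₘ δH k H) ∘ₗ cR :=
  LinearMap.ext h.2

lemma IsBicomodule.rTensor_comp (h : IsBicomodule k H cL cR) :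
    (cL ⊗ₘ LinearMap.id) ∘ₗ cR = asr k H D H ∘ₗ (LinearMap.id ⊗ₘ cR) ∘ₗ cL :=
  LinearMap.ext fun m => by simp [asr, h.2.2 m]

lemma IsCoalg.rTensor_comp (h : IsCoalg k Δd εd) :
    (Δd ⊗ₘ LinearMap.id) ∘ₗ Δd = asr k D D D ∘ₗ (LinearMap.id ⊗ₘ Δd) ∘ₗ Δd :=
  LinearMap.ext fun m => by simp [asr, ← h.2.2 m]

lemma IsLComodCoalg.lTensor_comp (h : IsLComodCoalg k H cL Δd εd) :
    (LinearMap.id ⊗ₘ Δd) ∘ₗ cL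
      = (μH k H ⊗ₘ LinearMap.id) ∘ₗ tt k H D H D ∘ₗ (cL ⊗ₘ cL) ∘ₗ Δd :=
  LinearMap.ext fun m => (h.1 m).symm

lemma IsRComodCoalg.rTensor_comp (h : IsRComodCoalg k H cR Δd εd) :
    (Δd ⊗ₘ LinearMap.id) ∘ₗ cR
      = (LinearMap.id ⊗ₘ μH k H) ∘ₗ tt k D H D H ∘ₗ (cR ⊗ₘ cR) ∘ₗ Δd :=
  LinearMap.ext fun m => (h.1 m).symm

variable (cL cR Δd) in
def coactedComul : D →ₗ[k] (D ⊗[k] H) ⊗[k] (H ⊗[k] D) := (cR ⊗ₘ cL) ∘ₗ Δd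

variable (cL cR Δd) in
def smashComul : D ⊗[k] H →ₗ[k] (D ⊗[k] H) ⊗[k] (D ⊗[k] H) :=
  smashMix ∘ₗ (coactedComul cL cR Δd ⊗ₘ δH k H)

variable (cL cR Δd) in
def iteratedCoaction :
    D →ₗ[k] (D ⊗[k] (H ⊗[k] H)) ⊗[k] ((H ⊗[k] (D ⊗[k] H)) ⊗[k] (H ⊗[k] (H ⊗[k] D))) :=
  ((LinearMap.id ⊗ₘ δH k H) ∘ₗ cR ⊗ₘ
    ((LinearMap.id ⊗ₘ cR) ∘ₗ cL ⊗ₘ (LinearMap.id ⊗ₘ cL) ∘ₗ cL) ∘ₗ Δd) ∘ₗ Δd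

lemma rTensor_coactedComul_comp (hbic : IsBicomodule k H cL cR)
    (hrcc : IsRComodCoalg k H cR Δd εd) :
    (coactedComul cL cR Δd ⊗ₘ LinearMap.id) ∘ₗ cR
      = (LinearMap.id ⊗ₘ μH k H) ∘ₗ tt k _ H _ H ∘ₗ (asr k D H H ⊗ₘ asr k H D H) ∘ₗ
          ((LinearMap.id ⊗ₘ δH k H) ∘ₗ cR ⊗ₘ (LinearMap.id ⊗ₘ cR) ∘ₗ cL) ∘ₗ Δd := by
  have natural : ((cR ⊗ₘ cL) ⊗ₘ LinearMap.id) ∘ₗ (LinearMap.id ⊗ₘ μH k H) ∘ₗ tt k D H D H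
      = (LinearMap.id ⊗ₘ μH k H) ∘ₗ tt k _ H _ H ∘ₗ
          ((cR ⊗ₘ LinearMap.id) ⊗ₘ (cL ⊗ₘ LinearMap.id)) := by
    ext; simp [tt]
  calc (coactedComul cL cR Δd ⊗ₘ LinearMap.id) ∘ₗ cR
      = ((cR ⊗ₘ cL) ⊗ₘ LinearMap.id) ∘ₗ ((Δd ⊗ₘ LinearMap.id) ∘ₗ cR) := by
        ext
        simp only [coactedComul, LinearMap.comp_apply, TensorProduct.map_map, LinearMap.comp_id]
    _ = (((cR ⊗ₘ cL) ⊗ₘ LinearMap.id) ∘ₗ (LinearMap.id ⊗ₘ μH k H) ∘ₗ tt k D H D H) ∘ₗ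
          (cR ⊗ₘ cR) ∘ₗ Δd := by
        rw [hrcc.rTensor_comp]; rfl
    _ = (LinearMap.id ⊗ₘ μH k H) ∘ₗ tt k _ H _ H ∘ₗ
          ((cR ⊗ₘ LinearMap.id) ∘ₗ cR ⊗ₘ (cL ⊗ₘ LinearMap.id) ∘ₗ cR) ∘ₗ Δd := by
        rw [natural]
        ext; simp only [LinearMap.comp_apply, TensorProduct.map_map]
    _ = _ := by
        rw [hbic.2.1.rTensor_comp, hbic.rTensor_comp]
        ext; simp only [LinearMap.comp_apply, TensorProduct.map_map]

lemma map_coactedComul_comp (hbic : IsBicomodule k H cL cR) (hco : IsCoalg k Δd εd)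
    (hrcc : IsRComodCoalg k H cR Δd εd) :
    ((coactedComul cL cR Δd ⊗ₘ LinearMap.id) ⊗ₘ (δH k H ⊗ₘ LinearMap.id)) ∘ₗ
        coactedComul cL cR Δd
      = (((LinearMap.id ⊗ₘ μH k H) ∘ₗ tt k _ H _ H ∘ₗ (asr k D H H ⊗ₘ asr k H D H)) ⊗ₘ
          asr k H H D) ∘ₗ asr k _ _ _ ∘ₗ iteratedCoaction cL cR Δd := by
  calc _ = ((coactedComul cL cR Δd ⊗ₘ LinearMap.id) ∘ₗ cR ⊗ₘ
            (δH k H ⊗ₘ LinearMap.id) ∘ₗ cL) ∘ₗ Δd := by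
        ext; simp only [coactedComul, LinearMap.comp_apply, TensorProduct.map_map]
    _ = (((LinearMap.id ⊗ₘ μH k H) ∘ₗ tt k _ H _ H ∘ₗ (asr k D H H ⊗ₘ asr k H D H)) ⊗ₘ
            asr k H H D) ∘ₗ
          (((LinearMap.id ⊗ₘ δH k H) ∘ₗ cR ⊗ₘ (LinearMap.id ⊗ₘ cR) ∘ₗ cL) ⊗ₘ
            (LinearMap.id ⊗ₘ cL) ∘ₗ cL) ∘ₗ ((Δd ⊗ₘ LinearMap.id) ∘ₗ Δd) := by
        rw [rTensor_coactedComul_comp hbic hrcc, hbic.1.rTensor_comp]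
        ext; simp only [LinearMap.comp_apply, LinearMap.comp_assoc,
          TensorProduct.map_comp_map_assoc, LinearMap.comp_id]
    _ = _ := by
        rw [hco.rTensor_comp]
        ext; simp only [iteratedCoaction, LinearMap.comp_apply, asr, LinearEquiv.coe_coe,
          TensorProduct.map_map_assoc_symm, TensorProduct.map_map, LinearMap.comp_id]

lemma lTensor_coactedComul_comp (hlcc : IsLComodCoalg k H cL Δd εd) :
    ((LinearMap.id ⊗ₘ δH k H) ⊗ₘ (LinearMap.id ⊗ₘ coactedComul cL cR Δd)) ∘ₗ
        coactedComul cL cR Δd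
      = (LinearMap.id ⊗ₘ (μH k H ⊗ₘ LinearMap.id) ∘ₗ tt k H _ H _) ∘ₗ
          iteratedCoaction cL cR Δd := by
  have natural : (LinearMap.id ⊗ₘ (cR ⊗ₘ cL)) ∘ₗ (μH k H ⊗ₘ LinearMap.id) ∘ₗ tt k H D H D
      = (μH k H ⊗ₘ LinearMap.id) ∘ₗ tt k H _ H _ ∘ₗ
          ((LinearMap.id ⊗ₘ cR) ⊗ₘ (LinearMap.id ⊗ₘ cL)) := by
    ext; simp [tt]
  calc _ = ((LinearMap.id ⊗ₘ δH k H) ∘ₗ cR ⊗ₘ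
            (LinearMap.id ⊗ₘ (cR ⊗ₘ cL)) ∘ₗ ((LinearMap.id ⊗ₘ Δd) ∘ₗ cL)) ∘ₗ Δd := by
        ext; simp only [coactedComul, LinearMap.comp_apply, TensorProduct.map_comp_map_assoc,
          LinearMap.id_comp]
    _ = ((LinearMap.id ⊗ₘ δH k H) ∘ₗ cR ⊗ₘ
            ((LinearMap.id ⊗ₘ (cR ⊗ₘ cL)) ∘ₗ (μH k H ⊗ₘ LinearMap.id) ∘ₗ tt k H D H D) ∘ₗ
              (cL ⊗ₘ cL) ∘ₗ Δd) ∘ₗ Δd := by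
        rw [hlcc.lTensor_comp]; rfl
    _ = _ := by
        rw [natural]
        ext; simp only [iteratedCoaction, LinearMap.comp_apply, LinearMap.comp_assoc,
          TensorProduct.map_comp_map_assoc, LinearMap.id_comp]

variable (θ : D →ₗ[k] (D ⊗[k] H) ⊗[k] (H ⊗[k] D))

lemma assoc_rTensor_smashMix_comp :
    (TensorProduct.assoc k (D ⊗[k] H) (D ⊗[k] H) (D ⊗[k] H)).toLinearMap ∘ₗ
        (smashMix ∘ₗ (θ ⊗ₘ δH k H) ⊗ₘ LinearMap.id) ∘ₗ smashMix ∘ₗ (θ ⊗ₘ δH k H)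
      = (TensorProduct.assoc k (D ⊗[k] H) (D ⊗[k] H) (D ⊗[k] H)).toLinearMap ∘ₗ
          (smashMix ⊗ₘ LinearMap.id) ∘ₗ smashMix ∘ₗ
          (((θ ⊗ₘ LinearMap.id) ⊗ₘ (δH k H ⊗ₘ LinearMap.id)) ∘ₗ θ ⊗ₘ
            (δH k H ⊗ₘ LinearMap.id) ∘ₗ δH k H) := by
  rw [← LinearMap.id_comp LinearMap.id, TensorProduct.map_comp, LinearMap.comp_assoc,
    ← LinearMap.comp_assoc _ smashMix, map_map_id_comp_smashMix _ δH_mul]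
  simp only [LinearMap.comp_assoc, ← TensorProduct.map_comp, LinearMap.id_comp]

lemma lTensor_smashMix_comp :
    (LinearMap.id ⊗ₘ smashMix ∘ₗ (θ ⊗ₘ δH k H)) ∘ₗ smashMix ∘ₗ (θ ⊗ₘ δH k H)
      = (LinearMap.id ⊗ₘ smashMix) ∘ₗ smashMix ∘ₗ
          (((LinearMap.id ⊗ₘ δH k H) ⊗ₘ (LinearMap.id ⊗ₘ θ)) ∘ₗ θ ⊗ₘ
            (LinearMap.id ⊗ₘ δH k H) ∘ₗ δH k H) := by
  rw [← LinearMap.id_comp LinearMap.id, TensorProduct.map_comp, LinearMap.comp_assoc,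
    ← LinearMap.comp_assoc _ smashMix, map_id_map_comp_smashMix _ δH_mul]
  simp only [LinearMap.comp_assoc, ← TensorProduct.map_comp, LinearMap.id_comp]

/-- Both sides send `((p ⊗ (x₁ ⊗ x₂)) ⊗ ((y ⊗ (q ⊗ y')) ⊗ (z ⊗ (z' ⊗ r)))) ⊗ (h₁ ⊗ (h₂ ⊗ h₃))`
to `(p ⊗ y z h₁) ⊗ ((q ⊗ z' h₂ x₁) ⊗ (r ⊗ h₃ x₂ y'))`. -/
lemma smashMix_normalForm :
    (TensorProduct.assoc k (D ⊗[k] H) (D ⊗[k] H) (D ⊗[k] H)).toLinearMap ∘ₗ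
        (smashMix ⊗ₘ LinearMap.id) ∘ₗ
        smashMix (X := (D ⊗[k] H) ⊗[k] (H ⊗[k] D)) (Y := D) (A := H ⊗[k] H) (B := H) ∘ₗ
        ((((LinearMap.id ⊗ₘ μH k H) ∘ₗ tt k _ H _ H ∘ₗ (asr k D H H ⊗ₘ asr k H D H)) ⊗ₘ
            asr k H H D) ∘ₗ asr k _ _ _ ⊗ₘ asr k H H H)
      = (LinearMap.id ⊗ₘ smashMix) ∘ₗ
          smashMix (X := D) (Y := (D ⊗[k] H) ⊗[k] (H ⊗[k] D)) (A := H) (B := H ⊗[k] H) ∘ₗ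
          ((LinearMap.id ⊗ₘ (μH k H ⊗ₘ LinearMap.id) ∘ₗ tt k H _ H _) ⊗ₘ LinearMap.id) := by
  ext
  simp [tt, asr, Algebra.TensorProduct.tmul_mul_tmul, mul_assoc]

theorem smashComul_coassoc (hbic : IsBicomodule k H cL cR) (hco : IsCoalg k Δd εd)
    (hlcc : IsLComodCoalg k H cL Δd εd) (hrcc : IsRComodCoalg k H cR Δd εd) :
    (TensorProduct.assoc k (D ⊗[k] H) (D ⊗[k] H) (D ⊗[k] H)).toLinearMap ∘ₗ
        (smashComul cL cR Δd ⊗ₘ LinearMap.id) ∘ₗ smashComul cL cR Δd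
      = (LinearMap.id ⊗ₘ smashComul cL cR Δd) ∘ₗ smashComul cL cR Δd := by
  rw [smashComul, assoc_rTensor_smashMix_comp, lTensor_smashMix_comp,
    map_coactedComul_comp hbic hco hrcc, lTensor_coactedComul_comp hlcc, rTensor_δH_comp_δH]
  refine TensorProduct.ext' fun d h => ?_
  simpa only [LinearMap.comp_apply, TensorProduct.map_tmul, LinearMap.id_apply] using
    LinearMap.congr_fun smashMix_normalForm
      (iteratedCoaction cL cR Δd d ⊗ₜ (LinearMap.id ⊗ₘ δH k H) (δH k H h))

@[simp] lemma smashCounit_tmul (d : D) (h : H) :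
    smashCounit k H εd (d ⊗ₜ h) = εd d * εH k H h := by
  simp [smashCounit]

lemma lid_smashCounit_smashMix (x : D ⊗[k] H) (y : H ⊗[k] D) (g g' : H) :
    TensorProduct.lid k (D ⊗[k] H)
        ((smashCounit k H εd ⊗ₘ LinearMap.id) (smashMix ((x ⊗ₜ y) ⊗ₜ (g ⊗ₜ g'))))
      = εH k H g • (TensorProduct.lid k D ((εH k H ⊗ₘ LinearMap.id) y) ⊗ₜ
          (g' * TensorProduct.lid k H ((εd ⊗ₘ LinearMap.id) x))) := by
  induction x using TensorProduct.induction_on with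
  | zero => simp
  | add x x' hx hx' => simp [TensorProduct.add_tmul, TensorProduct.tmul_add, mul_add, hx, hx']
  | tmul p p' =>
    induction y using TensorProduct.induction_on with
    | zero => simp
    | add y y' hy hy' => simp [TensorProduct.add_tmul, TensorProduct.tmul_add, hy, hy']
    | tmul q' q =>
      simp [εH, Bialgebra.counit_mul, TensorProduct.smul_tmul', TensorProduct.tmul_smul, smul_smul]
      ring_nf

lemma rid_smashCounit_smashMix (x : D ⊗[k] H) (y : H ⊗[k] D) (g g' : H) :
    TensorProduct.rid k (D ⊗[k] H)
        ((LinearMap.id ⊗ₘ smashCounit k H εd) (smashMix ((x ⊗ₜ y) ⊗ₜ (g ⊗ₜ g'))))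
      = εH k H g' • (TensorProduct.rid k D ((LinearMap.id ⊗ₘ εH k H) x) ⊗ₜ
          (TensorProduct.rid k H ((LinearMap.id ⊗ₘ εd) y) * g)) := by
  induction x using TensorProduct.induction_on with
  | zero => simp
  | add x x' hx hx' => simp [TensorProduct.add_tmul, hx, hx']
  | tmul p p' =>
    induction y using TensorProduct.induction_on with
    | zero => simp
    | add y y' hy hy' => simp [TensorProduct.add_tmul, TensorProduct.tmul_add, add_mul, hy, hy']
    | tmul q' q =>
      simp [εH, Bialgebra.counit_mul, TensorProduct.smul_tmul', TensorProduct.tmul_smul, smul_smul]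
      ring_nf

lemma lid_smashCounit_smashMix_map (hL : IsLeftComodule k H cL)
    (hrcc : IsRComodCoalg k H cR Δd εd) (z : D ⊗[k] D) (w : H ⊗[k] H) :
    TensorProduct.lid k (D ⊗[k] H)
        ((smashCounit k H εd ⊗ₘ LinearMap.id) (smashMix ((cR ⊗ₘ cL) z ⊗ₜ w)))
      = TensorProduct.lid k D ((εd ⊗ₘ LinearMap.id) z) ⊗ₜ
          TensorProduct.lid k H ((εH k H ⊗ₘ LinearMap.id) w) := by
  induction z using TensorProduct.induction_on with
  | zero => simp
  | add z z' hz hz' => simp [TensorProduct.add_tmul, hz, hz']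
  | tmul a b =>
    induction w using TensorProduct.induction_on with
    | zero => simp
    | add w w' hw hw' => simp only [TensorProduct.tmul_add, map_add, hw, hw']
    | tmul g g' =>
      rw [TensorProduct.map_tmul, lid_smashCounit_smashMix, hL.1 b, hrcc.2 a]
      simp [TensorProduct.smul_tmul', TensorProduct.tmul_smul, smul_smul]

lemma rid_smashCounit_smashMix_map (hR : IsRightComodule k H cR)
    (hlcc : IsLComodCoalg k H cL Δd εd) (z : D ⊗[k] D) (w : H ⊗[k] H) :
    TensorProduct.rid k (D ⊗[k] H)
        ((LinearMap.id ⊗ₘ smashCounit k H εd) (smashMix ((cR ⊗ₘ cL) z ⊗ₜ w)))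
      = TensorProduct.rid k D ((LinearMap.id ⊗ₘ εd) z) ⊗ₜ
          TensorProduct.rid k H ((LinearMap.id ⊗ₘ εH k H) w) := by
  induction z using TensorProduct.induction_on with
  | zero => simp
  | add z z' hz hz' => simp [TensorProduct.add_tmul, hz, hz']
  | tmul a b =>
    induction w using TensorProduct.induction_on with
    | zero => simp
    | add w w' hw hw' => simp only [TensorProduct.tmul_add, map_add, hw, hw']
    | tmul g g' =>
      rw [TensorProduct.map_tmul, rid_smashCounit_smashMix, hR.1 a, hlcc.2 b]
      simp [TensorProduct.smul_tmul', TensorProduct.tmul_smul, smul_smul]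

theorem lid_smashCounit_smashComul (hL : IsLeftComodule k H cL) (hco : IsCoalg k Δd εd)
    (hrcc : IsRComodCoalg k H cR Δd εd) (x : D ⊗[k] H) :
    TensorProduct.lid k (D ⊗[k] H)
      ((smashCounit k H εd ⊗ₘ LinearMap.id) (smashComul cL cR Δd x)) = x := by
  induction x using TensorProduct.induction_on with
  | zero => simp
  | add x x' hx hx' => simp [hx, hx']
  | tmul d h =>
    simp only [smashComul, coactedComul, LinearMap.comp_apply, TensorProduct.map_tmul]
    rw [lid_smashCounit_smashMix_map hL hrcc, hco.1 d, lid_rTensor_εH_δH]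

theorem rid_smashCounit_smashComul (hR : IsRightComodule k H cR) (hco : IsCoalg k Δd εd)
    (hlcc : IsLComodCoalg k H cL Δd εd) (x : D ⊗[k] H) :
    TensorProduct.rid k (D ⊗[k] H)
      ((LinearMap.id ⊗ₘ smashCounit k H εd) (smashComul cL cR Δd x)) = x := by
  induction x using TensorProduct.induction_on with
  | zero => simp
  | add x x' hx hx' => simp [hx, hx']
  | tmul d h =>
    simp only [smashComul, coactedComul, LinearMap.comp_apply, TensorProduct.map_tmul]
    rw [rid_smashCounit_smashMix_map hR hlcc, hco.2.1 d, rid_lTensor_εH_δH]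

end SmashCoproduct

/-- the L-R-smash coproduct `D ♮ H` is a coassociative counital coalgebra. -/
theorem lr_smash_coproduct_is_coalgebra
    {k : Type*} [CommRing k] {H : Type*} [Ring H] [Bialgebra k H]
    {D : Type*} [AddCommGroup D] [Module k D]
    (cL : D →ₗ[k] H ⊗[k] D) (cR : D →ₗ[k] D ⊗[k] H)
    (Δd : D →ₗ[k] D ⊗[k] D) (εd : D →ₗ[k] k)
    (hbic : IsBicomodule k H cL cR) (hco : IsCoalg k Δd εd)
    (hlcc : IsLComodCoalg k H cL Δd εd) (hrcc : IsRComodCoalg k H cR Δd εd)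
    (Δs : D ⊗[k] H →ₗ[k] (D ⊗[k] H) ⊗[k] (D ⊗[k] H))
    (hΔ : ∀ (d : D) (h : H), Δs (d ⊗ₜ h) = Wmap k H cL cR (Δd d ⊗ₜ δH k H h)) :
    (∀ x : D ⊗[k] H,
      TensorProduct.assoc k (D ⊗[k] H) (D ⊗[k] H) (D ⊗[k] H)
          (TensorProduct.map Δs LinearMap.id (Δs x))
        = TensorProduct.map LinearMap.id Δs (Δs x)) ∧
    (∀ x : D ⊗[k] H,
      TensorProduct.lid k (D ⊗[k] H)
          (TensorProduct.map (smashCounit k H εd) LinearMap.id (Δs x)) = x) ∧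
    (∀ x : D ⊗[k] H,
      TensorProduct.rid k (D ⊗[k] H)
          (TensorProduct.map LinearMap.id (smashCounit k H εd) (Δs x)) = x) := by
  obtain rfl : Δs = smashComul cL cR Δd := TensorProduct.ext' fun d h => by
    simp [hΔ, Wmap_eq_smashMix_comp, smashComul, coactedComul]
  exact ⟨LinearMap.congr_fun (smashComul_coassoc hbic hco hlcc hrcc),
    lid_smashCounit_smashComul hbic.1 hco hrcc, rid_smashCounit_smashComul hbic.2.1 hco hlcc⟩

end LRPaper
end
end

section
/- Let H be a bialgebra and (H, D) an L-R-admissible pair. Then the identity [c(h·d)]₁ ⊗ [c(h·d)]₂ = c₁(c₂^{(-1)}h₁ · d₁^{<0>}) ⊗ (c₂^{(0)} · d₁^{<1>})(h₂ · d₂) holds for all h ∈ H and c, d ∈ D. -/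
open TensorProduct
noncomputable section
namespace LRPaper

lemma middle_eq_of {k : Type*} [CommRing k]
    {A B C E B' C' B₂ C₂ : Type*} [AddCommGroup A] [Module k A] [AddCommGroup B] [Module k B]
    [AddCommGroup C] [Module k C] [AddCommGroup E] [Module k E]
    [AddCommGroup B'] [Module k B'] [AddCommGroup C'] [Module k C']
    [AddCommGroup B₂] [Module k B₂] [AddCommGroup C₂] [Module k C₂]
    (f : B ⊗[k] C →ₗ[k] B' ⊗[k] C') (g : B₂ ⊗[k] C₂ →ₗ[k] B' ⊗[k] C')
    {b : B} {x : C} {b₂ : B₂} {x₂ : C₂} (hfg : f (b ⊗ₜ x) = g (b₂ ⊗ₜ x₂))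
    (a : A) (y : E) :
    middle k (A := A) (E := E) f ((a ⊗ₜ b) ⊗ₜ (x ⊗ₜ y))
      = middle k g ((a ⊗ₜ b₂) ⊗ₜ (x₂ ⊗ₜ y)) := by
  simp only [middle, asl, asr, LinearMap.comp_apply, LinearEquiv.coe_coe,
    TensorProduct.assoc_symm_tmul, TensorProduct.assoc_tmul, TensorProduct.map_tmul,
    LinearMap.id_coe, id_eq]
  rw [hfg]

lemma braid_act_eq_Fmap {k : Type*} [CommRing k] {H : Type*} [Ring H] [Bialgebra k H]
    {D : Type*} [Ring D] [Algebra k D]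
    (aL : H ⊗[k] D →ₗ[k] D) (aR : D ⊗[k] H →ₗ[k] D)
    (cL : D →ₗ[k] H ⊗[k] D) (cR : D →ₗ[k] D ⊗[k] H)
    (hLong : CondLongLR k H aL cR)
    (hmul : ∀ (h h' : H) (m : D), aL ((h * h') ⊗ₜ m) = aL (h ⊗ₜ aL (h' ⊗ₜ m)))
    (b : D) (u : H ⊗[k] D) :
    braid k H cL aR aL cR (b ⊗ₜ aL u)
      = Fmap k H D aL aR cL (b ⊗ₜ TensorProduct.map LinearMap.id cR u) := by
  induction u using TensorProduct.induction_on with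
  | zero => simp only [LinearMap.map_zero, LinearEquiv.map_zero, tmul_zero]
  | tmul hh x =>
    simp only [TensorProduct.map_tmul, LinearMap.id_coe, id_eq]
    simp only [braid, Fmap, LinearMap.comp_apply, TensorProduct.map_tmul,
      LinearMap.id_coe, id_eq]
    rw [hLong hh x]
    generalize cL b = p
    generalize cR x = q
    induction p using TensorProduct.induction_on with
    | zero => simp only [LinearMap.map_zero, LinearEquiv.map_zero, zero_tmul, tmul_zero]
    | tmul g c' =>
      induction q using TensorProduct.induction_on with
      | zero => simp only [LinearMap.map_zero, LinearEquiv.map_zero, zero_tmul, tmul_zero]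
      | tmul x' u' =>
        simp only [tt, sw, μH, asl, asr, LinearMap.comp_apply, LinearEquiv.coe_coe,
          TensorProduct.assoc_symm_tmul, TensorProduct.assoc_tmul,
          TensorProduct.comm_tmul, TensorProduct.tensorTensorTensorComm_tmul,
          TensorProduct.map_tmul, LinearMap.id_coe, id_eq, LinearMap.mul'_apply]
        rw [hmul]
      | add q1 q2 hq1 hq2 =>
        simp only [tmul_add, add_tmul, map_add, hq1, hq2]
    | add p1 p2 hp1 hp2 =>
      simp only [tmul_add, add_tmul, map_add, hp1, hp2]
  | add u v hu hv =>
    simp only [map_add, tmul_add, hu, hv]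

/-- identity (2.1) of the paper. -/
theorem lr_admissible_identity_one
    {k : Type*} [CommRing k] {H : Type*} [Ring H] [Bialgebra k H]
    {D : Type*} [Ring D] [Algebra k D]
    (aL : H ⊗[k] D →ₗ[k] D) (aR : D ⊗[k] H →ₗ[k] D)
    (cL : D →ₗ[k] H ⊗[k] D) (cR : D →ₗ[k] D ⊗[k] H)
    (Δd : D →ₗ[k] D ⊗[k] D) (εd : D →ₗ[k] k)
    (hadm : LRAdmissible k H aL aR cL cR Δd εd) :
    ∀ (h : H) (c d : D),
      Δd (c * aL (h ⊗ₜ d))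
        = TensorProduct.map (μD k) (μD k)
            (middle k (Fmap k H D aL aR cL)
              (Δd c ⊗ₜ
                (TensorProduct.map (TensorProduct.map LinearMap.id cR) aL
                  (tt k H H D D (δH k H h ⊗ₜ Δd d))))) := by
  obtain ⟨hbim, -, -, -, -, -, -, -, -, -, -, hcomulact, hbraidmul, -, hlonglr, -, -, -⟩ := hadm
  have hmul := hbim.1.2
  intro h c d
  rw [hbraidmul c (aL (h ⊗ₜ d)), hcomulact.1 h d]
  suffices hts : ∀ (t : D ⊗[k] D) (s : (H ⊗[k] D) ⊗[k] (H ⊗[k] D)),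
      TensorProduct.map (μD k) (μD k)
        (middle k (braid k H cL aR aL cR) (t ⊗ₜ TensorProduct.map aL aL s))
      = TensorProduct.map (μD k) (μD k)
        (middle k (Fmap k H D aL aR cL)
          (t ⊗ₜ TensorProduct.map (TensorProduct.map LinearMap.id cR) aL s)) by
    exact hts (Δd c) (tt k H H D D (δH k H h ⊗ₜ Δd d))
  intro t s
  induction t using TensorProduct.induction_on with
  | zero => simp only [LinearMap.map_zero, LinearEquiv.map_zero, zero_tmul, tmul_zero]
  | tmul a b =>
    induction s using TensorProduct.induction_on with
    | zero => simp only [LinearMap.map_zero, LinearEquiv.map_zero, zero_tmul, tmul_zero]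
    | tmul u v =>
      simp only [TensorProduct.map_tmul]
      exact congrArg _
        (middle_eq_of _ _ (braid_act_eq_Fmap aL aR cL cR hlonglr hmul b u) a (aL v))
    | add s1 s2 h1 h2 =>
      simp only [map_add, tmul_add, h1, h2]
  | add t1 t2 h1 h2 =>
    simp only [map_add, add_tmul, h1, h2]

end LRPaper
end
end
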